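/- arXiv:2306.10694 — 5 statements merged into one kernel-verified Lean document; each statement's English description precedes it below -/
import Mathlib

section
/- Let H > 0 and n ≥ 1. Let (Ω, 𝔉, ℙ) be a probability space with a filtration (𝔉_t)_{t=0}^n. Let (u_t)_{t=1}^n and (v_t)_{t=1}^n be real-valued predictable processes (u_t and v_t are 𝔉_{t−1}-measurable), and let (y_t)_{t=1}^n be a real-valued adapted process (y_t is 𝔉_t-measurable) with 0 ≤ y_t ≤ H almost surely. Set ξ_t = 𝔼[y_t | 𝔉_{t−1}] − v_t. Then for any δ ∈ (0, 1), with probability at least 1 − δ, the following holds simultaneously for every k ∈ {1, …, n}: Σ_{t=1}^k [(v_t − y_t)² − (u_t − y_t)²] ≤ H² log(1/δ) − (1/2)Σ_{t=1}^k (u_t − v_t)² + 2Σ_{t=1}^k (u_t − v_t)·ξ_t. -/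
open Real

lemma hoeff_core {p : ℝ} (hp0 : 0 ≤ p) (hp1 : p ≤ 1) (t : ℝ) :
    1 - p + p * exp t ≤ exp (p * t + t ^ 2 / 8) := by
  set den : ℝ → ℝ := fun s => 1 - p + p * exp s with hden_def
  have hden_pos : ∀ s, 0 < den s := by
    intro s
    rcases eq_or_lt_of_le hp1 with h | h
    · subst h; simpa [hden_def] using exp_pos s
    · have : 0 < 1 - p := by linarith
      have : 0 ≤ p * exp s := mul_nonneg hp0 (exp_pos s).le
      simp only [hden_def]; linarith
  set f : ℝ → ℝ := fun s => p * s + s ^ 2 / 8 - log (den s) with hf_def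
  set g : ℝ → ℝ := fun s => p + s / 4 - p * exp s / den s with hg_def
  have hden' : ∀ s, HasDerivAt den (p * exp s) s := by
    intro s
    exact ((hasDerivAt_exp s).const_mul p).const_add (1 - p)
  have hf' : ∀ s, HasDerivAt f (g s) s := by
    intro s
    have h1 : HasDerivAt (fun s : ℝ => p * s + s ^ 2 / 8) (p + 2 * s / 8) s := by
      have := ((hasDerivAt_pow 2 s).div_const 8).const_add 0
      have h2 : HasDerivAt (fun s : ℝ => p * s) p s := by
        simpa using (hasDerivAt_id s).const_mul p
      exact h2.add (((hasDerivAt_pow 2 s).div_const 8).congr_deriv (by norm_num))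
    have h3 : HasDerivAt (fun s => log (den s)) (p * exp s / den s) s :=
      (hden' s).log (hden_pos s).ne'
    have := h1.sub h3
    exact this.congr_deriv (by simp only [hg_def]; ring)
  have hg' : ∀ s, HasDerivAt g (1 / 4 - p * exp s * (1 - p) / (den s) ^ 2) s := by
    intro s
    have h1 : HasDerivAt (fun s : ℝ => p + s / 4) (1 / 4) s := by
      simpa using ((hasDerivAt_id s).div_const 4).const_add p
    have h2 : HasDerivAt (fun s => p * exp s / den s)
        ((p * exp s * den s - p * exp s * (p * exp s)) / (den s) ^ 2) s :=
      ((hasDerivAt_exp s).const_mul p).div (hden' s) (hden_pos s).ne'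
    have heq : den s - p * exp s = 1 - p := by simp only [hden_def]; ring
    have := h1.sub h2
    exact this.congr_deriv (by
      rw [show p * exp s * den s - p * exp s * (p * exp s) = p * exp s * (den s - p * exp s) by ring, heq])
  have hg'_nonneg : ∀ s, 0 ≤ 1 / 4 - p * exp s * (1 - p) / (den s) ^ 2 := by
    intro s
    rw [sub_nonneg, div_le_iff₀ (pow_pos (hden_pos s) 2)]
    have h1 : den s = (1 - p) + p * exp s := by simp [hden_def]
    nlinarith [sq_nonneg ((1 - p) - p * exp s), hden_pos s]
  have hg_mono : Monotone g := by
    refine monotone_of_deriv_nonneg (fun s => (hg' s).differentiableAt) ?_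
    intro s
    rw [(hg' s).deriv]
    exact hg'_nonneg s
  have hg0 : g 0 = 0 := by simp [hg_def, hden_def]
  have hf_cont : Continuous f := by
    have : Differentiable ℝ f := fun s => (hf' s).differentiableAt
    exact this.continuous
  have hf0 : f 0 = 0 := by simp [hf_def, hden_def]
  have hft : 0 ≤ f t := by
    rcases le_total t 0 with ht | ht
    · have hanti : AntitoneOn f (Set.Iic 0) := by
        refine antitoneOn_of_deriv_nonpos (convex_Iic 0) (hf_cont.continuousOn)
          (fun s _ => (hf' s).differentiableAt.differentiableWithinAt) ?_
        intro s hs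
        rw [interior_Iic] at hs
        rw [(hf' s).deriv]
        have : g s ≤ g 0 := hg_mono hs.le
        rw [hg0] at this; exact this
      have := hanti (Set.mem_Iic.2 ht) (Set.mem_Iic.2 le_rfl) ht
      rwa [hf0] at this
    · have hmono : MonotoneOn f (Set.Ici 0) := by
        refine monotoneOn_of_deriv_nonneg (convex_Ici 0) (hf_cont.continuousOn)
          (fun s _ => (hf' s).differentiableAt.differentiableWithinAt) ?_
        intro s hs
        rw [interior_Ici] at hs
        rw [(hf' s).deriv]
        have : g 0 ≤ g s := hg_mono hs.le
        rw [hg0] at this; exact this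
      have := hmono (Set.mem_Ici.2 le_rfl) (Set.mem_Ici.2 ht) ht
      rwa [hf0] at this
  have : log (den t) ≤ p * t + t ^ 2 / 8 := by
    simp only [hf_def] at hft; linarith
  calc den t = exp (log (den t)) := (exp_log (hden_pos t)).symm
  _ ≤ exp (p * t + t ^ 2 / 8) := exp_le_exp.2 this

open MeasureTheory Finset in
lemma ville_ineq {Ω : Type*} {m : MeasurableSpace Ω} {μ : Measure Ω} [IsProbabilityMeasure μ]
    {𝒢 : Filtration ℕ m} {f : ℕ → Ω → ℝ}
    (hsup : Supermartingale f 𝒢 μ) (hnonneg : 0 ≤ f) (ε : NNReal) (n : ℕ) :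
    ε • μ {ω | (ε : ℝ) ≤ (range (n + 1)).sup' nonempty_range_add_one fun k => f k ω} ≤
      ENNReal.ofReal (∫ ω, f 0 ω ∂μ) := by
  set A := {ω | (ε : ℝ) ≤ (range (n + 1)).sup' nonempty_range_add_one fun k => f k ω} with hA
  set τ : Ω → WithTop ℕ := fun ω => ((hittingBtwn f {y : ℝ | (ε : ℝ) ≤ y} 0 n ω : ℕ) : WithTop ℕ)
    with hτdef
  have hτ : IsStoppingTime 𝒢 τ :=
    hsup.stronglyAdapted.adapted.isStoppingTime_hittingBtwn measurableSet_Ici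
  have hτ_le : ∀ ω, τ ω ≤ n := fun ω => WithTop.coe_le_coe.mpr (hittingBtwn_le ω)
  have hsub : Submartingale (-f) 𝒢 μ := hsup.neg
  have hsv_neg : Integrable (stoppedValue (-f) τ) μ := hsub.integrable_stoppedValue hτ hτ_le
  have hsv : Integrable (stoppedValue f τ) μ := by
    have := hsv_neg.neg
    convert this using 1
    ext ω
    simp [stoppedValue]
  have hn : Set.Icc 0 n = {k | k ≤ n} := by ext x; simp
  have hptwise : ∀ ω, ((ε : ℝ) ≤ (range (n + 1)).sup' nonempty_range_add_one fun k => f k ω) →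
      (ε : ℝ) ≤ stoppedValue f τ ω := by
    intro x hx
    simp_rw [le_sup'_iff, mem_range, Nat.lt_succ_iff] at hx
    refine stoppedValue_hittingBtwn_mem ?_
    simp only [Set.mem_Icc, zero_le, true_and, Set.mem_ofPred_eq]
    exact let ⟨j, hj₁, hj₂⟩ := hx; ⟨j, hj₁, hj₂⟩
  have hA_meas : MeasurableSet A :=
    measurableSet_le measurable_const
      (Finset.measurable_range_sup'' fun k _ =>
        (hsup.stronglyMeasurable k).measurable.le (𝒢.le k))
  have h1 : (ε : ℝ) * (μ A).toReal ≤ ∫ ω in A, stoppedValue f τ ω ∂μ :=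
    setIntegral_ge_of_const_le_real hA_meas (measure_ne_top _ _) hptwise hsv.integrableOn
  have h2 : ∫ ω in A, stoppedValue f τ ω ∂μ ≤ ∫ ω, stoppedValue f τ ω ∂μ := by
    refine setIntegral_le_integral hsv ?_
    filter_upwards with ω
    exact hnonneg _ ω
  have h3 : ∫ ω, stoppedValue f τ ω ∂μ ≤ ∫ ω, f 0 ω ∂μ := by
    have := hsub.expected_stoppedValue_mono (τ := fun _ => ((0 : ℕ) : WithTop ℕ))
      (isStoppingTime_const 𝒢 0) hτ
      (fun ω => WithTop.coe_le_coe.mpr (Nat.zero_le _)) hτ_le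
    have heq1 : stoppedValue (-f) (fun _ => ((0 : ℕ) : WithTop ℕ)) = -f 0 := stoppedValue_const _ _
    have heq2 : stoppedValue (-f) τ = -stoppedValue f τ := by
      ext ω; simp [stoppedValue]
    rw [heq1, heq2] at this
    simp only [Pi.neg_apply, integral_neg] at this
    linarith
  rw [ENNReal.le_ofReal_iff_toReal_le, ENNReal.toReal_smul]
  · exact le_trans h1 (le_trans h2 h3)
  · exact ENNReal.mul_ne_top (by simp) (measure_ne_top _ _)
  · exact le_trans (mul_nonneg ε.coe_nonneg ENNReal.toReal_nonneg) (le_trans h1 (le_trans h2 h3))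

open MeasureTheory BigOperators

set_option maxHeartbeats 1600000 in
theorem stmt5 {Ω : Type*} {m : MeasurableSpace Ω} (μ : Measure Ω) [IsProbabilityMeasure μ]
    (H : ℝ) (hH : 0 < H) (n : ℕ) (hn : 1 ≤ n)
    (𝔉 : Filtration ℕ m)
    (u v y : ℕ → Ω → ℝ)
    (hu : ∀ t ∈ Finset.Icc 1 n, StronglyMeasurable[𝔉 (t - 1)] (u t))
    (hv : ∀ t ∈ Finset.Icc 1 n, StronglyMeasurable[𝔉 (t - 1)] (v t))
    (hy : ∀ t ∈ Finset.Icc 1 n, StronglyMeasurable[𝔉 t] (y t))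
    (hybdd : ∀ t ∈ Finset.Icc 1 n, ∀ᵐ ω ∂μ, 0 ≤ y t ω ∧ y t ω ≤ H)
    (ξ : ℕ → Ω → ℝ) (hξ : ∀ t, ξ t = fun ω => (μ[y t | 𝔉 (t - 1)]) ω - v t ω)
    (δ : ℝ) (hδ : δ ∈ Set.Ioo (0 : ℝ) 1) :
    ENNReal.ofReal (1 - δ) ≤
      μ {ω | ∀ k ∈ Finset.Icc 1 n,
        ∑ t ∈ Finset.Icc 1 k, ((v t ω - y t ω) ^ 2 - (u t ω - y t ω) ^ 2) ≤
          H ^ 2 * Real.log (1 / δ)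
            - (1 / 2) * ∑ t ∈ Finset.Icc 1 k, (u t ω - v t ω) ^ 2
            + 2 * ∑ t ∈ Finset.Icc 1 k, (u t ω - v t ω) * ξ t ω} := by
  obtain ⟨hδ0, hδ1⟩ := hδ
  have hH2 : (0:ℝ) < H ^ 2 := by positivity
  -- notation
  set w : ℕ → Ω → ℝ := fun t => μ[y t | 𝔉 (t-1)] with hw_def
  set g : ℕ → Ω → ℝ := fun t ω => if t ∈ Finset.Icc 1 n then
      (2*(u t ω - v t ω)*(y t ω - w t ω) - (u t ω - v t ω)*(u t ω - v t ω)/2)/H^2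
    else 0 with hg_def
  set M : ℕ → Ω → ℝ := fun k ω => Real.exp (∑ t ∈ Finset.Icc 1 k, g t ω) with hM_def
  -- basic bound helper
  have key_exp_bound : ∀ D e : ℝ, -H ≤ e → e ≤ H → (2*D*e - D*D/2)/H^2 ≤ 2 := by
    intro D e h1 h2
    rw [div_le_iff₀ hH2]
    nlinarith [sq_nonneg (D - 2*e), mul_nonneg (by linarith : (0:ℝ) ≤ H - e)
      (by linarith : (0:ℝ) ≤ H + e)]
  -- convexity of exp
  have convex_exp : ∀ s Y : ℝ, 0 ≤ Y → Y ≤ H →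
      Real.exp (s*Y) ≤ 1 + (Y/H)*(Real.exp (s*H) - 1) := by
    intro s Y h0 h1
    have hθ0 : 0 ≤ Y/H := by positivity
    have hθ1 : Y/H ≤ 1 := by rw [div_le_one hH]; exact h1
    have hc := convexOn_exp.2 (Set.mem_univ (0:ℝ)) (Set.mem_univ (s*H))
      (by linarith : (0:ℝ) ≤ 1 - Y/H) hθ0 (by ring)
    simp only [smul_eq_mul, mul_zero, zero_add, Real.exp_zero, mul_one] at hc
    have harg : Y/H * (s*H) = s*Y := by field_simp
    rw [harg] at hc
    linarith
  -- measurability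
  have hw_meas : ∀ t, StronglyMeasurable[𝔉 t] (w t) := fun t =>
    stronglyMeasurable_condExp.mono (𝔉.mono (Nat.sub_le t 1))
  have hg_meas : ∀ t, StronglyMeasurable[𝔉 t] (g t) := by
    intro t
    by_cases ht : t ∈ Finset.Icc 1 n
    · have hgt : g t = fun ω =>
          (2*(u t ω - v t ω)*(y t ω - w t ω) - (u t ω - v t ω)*(u t ω - v t ω)/2)/H^2 := by
        funext ω; simp only [hg_def, ht, if_true]
      rw [hgt]
      have hut : StronglyMeasurable[𝔉 t] (u t) := (hu t ht).mono (𝔉.mono (Nat.sub_le t 1))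
      have hvt : StronglyMeasurable[𝔉 t] (v t) := (hv t ht).mono (𝔉.mono (Nat.sub_le t 1))
      have hyt := hy t ht
      have hwt := hw_meas t
      apply Measurable.stronglyMeasurable
      have h1 : Measurable[𝔉 t] (u t) := hut.measurable
      have h2 : Measurable[𝔉 t] (v t) := hvt.measurable
      have h3 : Measurable[𝔉 t] (y t) := hyt.measurable
      have h4 : Measurable[𝔉 t] (w t) := hwt.measurable
      fun_prop
    · have hgt : g t = fun _ => (0:ℝ) := by funext ω; simp only [hg_def, ht, if_false]
      rw [hgt]; exact stronglyMeasurable_const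
  have hM_meas : ∀ k, StronglyMeasurable[𝔉 k] (M k) := by
    intro k
    have : StronglyMeasurable[𝔉 k] (fun ω => ∑ t ∈ Finset.Icc 1 k, g t ω) :=
      Finset.stronglyMeasurable_fun_sum _ fun t ht =>
        (hg_meas t).mono (𝔉.mono (Finset.mem_Icc.mp ht).2)
    exact (Real.continuous_exp.comp_stronglyMeasurable this)
  -- a.e. bounds on y and w
  have hy_int : ∀ t ∈ Finset.Icc 1 n, Integrable (y t) μ := by
    intro t ht
    refine Integrable.mono' (integrable_const H) (((hy t ht).mono (𝔉.le t)).aestronglyMeasurable) ?_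
    filter_upwards [hybdd t ht] with ω hω
    rw [Real.norm_eq_abs, abs_le]; constructor <;> linarith [hω.1, hω.2]
  have hw_bdd : ∀ t ∈ Finset.Icc 1 n, ∀ᵐ ω ∂μ, 0 ≤ w t ω ∧ w t ω ≤ H := by
    intro t ht
    have h0 : 0 ≤ᵐ[μ] w t := condExp_nonneg (by filter_upwards [hybdd t ht] with ω hω using hω.1)
    have h1 : w t ≤ᵐ[μ] fun _ => H := by
      have h2 : μ[y t | 𝔉 (t-1)] ≤ᵐ[μ] μ[(fun _ => H) | 𝔉 (t-1)] :=
        condExp_mono (hy_int t ht) (integrable_const H)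
          (by filter_upwards [hybdd t ht] with ω hω using hω.2)
      rwa [condExp_const (𝔉.le (t-1))] at h2
    filter_upwards [h0, h1] with ω hω0 hω1
    exact ⟨hω0, hω1⟩
  -- a.e. bound on g
  have hg_bdd : ∀ t, ∀ᵐ ω ∂μ, g t ω ≤ 2 := by
    intro t
    by_cases ht : t ∈ Finset.Icc 1 n
    · filter_upwards [hybdd t ht, hw_bdd t ht] with ω hy' hw'
      simp only [hg_def, ht, if_true]
      exact key_exp_bound _ _ (by linarith [hy'.1, hw'.2]) (by linarith [hy'.2, hw'.1])
    · simp only [hg_def, ht, if_false]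
      filter_upwards with ω using by norm_num
  have hM_bdd : ∀ k, ∀ᵐ ω ∂μ, M k ω ≤ Real.exp (2 * k) := by
    intro k
    have hball : ∀ᵐ ω ∂μ, ∀ t ∈ Finset.Icc 1 k, g t ω ≤ 2 := by
      exact (Finset.eventually_all (Finset.Icc 1 k)).2 fun t _ => hg_bdd t
    filter_upwards [hball] with ω hω
    simp only [hM_def]
    rw [Real.exp_le_exp]
    calc ∑ t ∈ Finset.Icc 1 k, g t ω ≤ ∑ t ∈ Finset.Icc 1 k, (2:ℝ) :=
          Finset.sum_le_sum hω
    _ ≤ 2 * k := by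
          rw [Finset.sum_const, Nat.card_Icc, Nat.add_sub_cancel, nsmul_eq_mul]
          exact le_of_eq (by ring)
  have hM_pos : ∀ k ω, 0 < M k ω := fun k ω => Real.exp_pos _
  have hM_int : ∀ k, Integrable (M k) μ := by
    intro k
    refine Integrable.mono' (integrable_const (Real.exp (2*k)))
      (((hM_meas k).mono (𝔉.le k)).aestronglyMeasurable) ?_
    filter_upwards [hM_bdd k] with ω hω
    rw [Real.norm_eq_abs, abs_of_pos (hM_pos k ω)]
    exact hω
  -- supermartingale step
  have hstep : ∀ k, μ[M (k+1) | 𝔉 k] ≤ᵐ[μ] M k := by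
    intro k
    by_cases hkn : k + 1 ≤ n
    case neg =>
      have hM_eq : M (k+1) = M k := by
        funext ω
        simp only [hM_def]
        rw [Finset.sum_Icc_succ_top (Nat.le_add_left 1 k)]
        have hz : g (k+1) ω = 0 := by
          simp only [hg_def]
          rw [if_neg]
          simp only [Finset.mem_Icc]
          omega
        rw [hz, add_zero]
      rw [hM_eq, condExp_of_stronglyMeasurable (𝔉.le k) (hM_meas k) (hM_int k)]
    case pos =>
      have hmem : k + 1 ∈ Finset.Icc 1 n := Finset.mem_Icc.mpr ⟨Nat.le_add_left 1 k, hkn⟩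
      set D : Ω → ℝ := fun ω => u (k+1) ω - v (k+1) ω with hD_def
      set W : Ω → ℝ := w (k+1) with hW_def
      set Y : Ω → ℝ := y (k+1) with hY_def
      set B : Ω → ℝ := fun ω => M k ω * Real.exp ((2*D ω*(-W ω) - D ω*D ω/2)/H^2) with hB_def
      set C : Ω → ℝ := fun ω => B ω * (Real.exp (2*D ω/H) - 1)/H with hC_def
      -- measurability
      have hD_sm : StronglyMeasurable[𝔉 k] D := (hu (k+1) hmem).sub (hv (k+1) hmem)
      have hW_sm : StronglyMeasurable[𝔉 k] W := stronglyMeasurable_condExp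
      have hB_sm : StronglyMeasurable[𝔉 k] B := by
        apply Measurable.stronglyMeasurable
        have h1 : Measurable[𝔉 k] D := hD_sm.measurable
        have h2 : Measurable[𝔉 k] W := hW_sm.measurable
        have h3 : Measurable[𝔉 k] (M k) := (hM_meas k).measurable
        fun_prop
      have hC_sm : StronglyMeasurable[𝔉 k] C := by
        apply Measurable.stronglyMeasurable
        have h1 : Measurable[𝔉 k] D := hD_sm.measurable
        have h2 : Measurable[𝔉 k] B := hB_sm.measurable
        fun_prop
      have hY_sm : StronglyMeasurable[m] Y := (hy (k+1) hmem).mono (𝔉.le (k+1))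
      -- pointwise nonnegativity of B
      have hB_nonneg : ∀ ω, 0 ≤ B ω := fun ω =>
        mul_nonneg (hM_pos k ω).le (Real.exp_pos _).le
      -- a.e. bounds
      have hB_bdd : ∀ᵐ ω ∂μ, B ω ≤ M k ω * Real.exp 2 := by
        filter_upwards [hw_bdd (k+1) hmem] with ω hωW
        have := key_exp_bound (D ω) (-W ω) (by linarith [hωW.2]) (by linarith [hωW.1])
        exact mul_le_mul_of_nonneg_left (Real.exp_le_exp.2 this) (hM_pos k ω).le
      have hBe_bdd : ∀ᵐ ω ∂μ, B ω * Real.exp (2*D ω/H) ≤ M k ω * Real.exp 2 := by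
        filter_upwards [hw_bdd (k+1) hmem] with ω hωW
        have hsum : B ω * Real.exp (2*D ω/H) =
            M k ω * Real.exp ((2*D ω*(H - W ω) - D ω*D ω/2)/H^2) := by
          simp only [hB_def]
          rw [mul_assoc, ← Real.exp_add]
          congr 1
          field_simp
          ring
        rw [hsum]
        have := key_exp_bound (D ω) (H - W ω) (by linarith [hωW.2]) (by linarith [hωW.1])
        exact mul_le_mul_of_nonneg_left (Real.exp_le_exp.2 this) (hM_pos k ω).le
      have hC_bdd : ∀ᵐ ω ∂μ, |C ω| ≤ M k ω * Real.exp 2 * 2 / H := by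
        filter_upwards [hB_bdd, hBe_bdd] with ω h1 h2
        simp only [hC_def]
        rw [abs_div, abs_of_pos hH, div_le_div_iff₀ hH hH, abs_mul,
          abs_of_nonneg (hB_nonneg ω)]
        have habs : |Real.exp (2*D ω/H) - 1| ≤ Real.exp (2*D ω/H) + 1 := by
          rw [abs_le]
          constructor <;> nlinarith [Real.exp_pos (2*D ω/H)]
        have hBe1 : B ω * |Real.exp (2*D ω/H) - 1| ≤ M k ω * Real.exp 2 * 2 := by
          have hm := mul_le_mul_of_nonneg_left habs (hB_nonneg ω)
          nlinarith [hB_nonneg ω]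
        nlinarith [mul_le_mul_of_nonneg_right hBe1 hH.le]
      -- integrability
      have hB_int : Integrable B μ := by
        refine Integrable.mono' (integrable_const (Real.exp (2*k) * Real.exp 2))
          ((hB_sm.mono (𝔉.le k)).aestronglyMeasurable) ?_
        filter_upwards [hB_bdd, hM_bdd k] with ω h1 h2
        rw [Real.norm_eq_abs, abs_of_nonneg (hB_nonneg ω)]
        calc B ω ≤ M k ω * Real.exp 2 := h1
        _ ≤ Real.exp (2*k) * Real.exp 2 := by nlinarith [Real.exp_pos (2:ℝ)]
      have hY_int : Integrable Y μ := hy_int (k+1) hmem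
      have hCY_int : Integrable (C * Y) μ := by
        refine Integrable.mono' (integrable_const (Real.exp (2*k) * Real.exp 2 * 2))
          (((hC_sm.mono (𝔉.le k)).mul hY_sm).aestronglyMeasurable) ?_
        filter_upwards [hC_bdd, hM_bdd k, hybdd (k+1) hmem] with ω h1 h2 h3
        rw [Pi.mul_apply, Real.norm_eq_abs, abs_mul]
        have hYabs : |Y ω| ≤ H := abs_le.2 ⟨by linarith [h3.1], h3.2⟩
        have hpos : (0:ℝ) ≤ M k ω * Real.exp 2 * 2 / H :=
          div_nonneg (by nlinarith [hM_pos k ω, Real.exp_pos (2:ℝ)]) hH.le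
        calc |C ω| * |Y ω| ≤ (M k ω * Real.exp 2 * 2 / H) * H :=
              mul_le_mul h1 hYabs (abs_nonneg _) hpos
        _ = M k ω * Real.exp 2 * 2 := by field_simp
        _ ≤ Real.exp (2*k) * Real.exp 2 * 2 := by nlinarith [Real.exp_pos (2:ℝ), hM_pos k ω]
      have hBCY_int : Integrable (B + C * Y) μ := hB_int.add hCY_int
      -- pointwise bound : M (k+1) ≤ B + C * Y a.e.
      have hptw : M (k+1) ≤ᵐ[μ] B + C * Y := by
        filter_upwards [hybdd (k+1) hmem] with ω hω
        have hg1 : g (k+1) ω = (2*D ω*(-W ω) - D ω*D ω/2)/H^2 + (2*D ω/H^2) * Y ω := by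
          simp only [hg_def, hmem, if_true, hD_def, hW_def, hY_def]
          field_simp
          ring
        have hsplit : M (k+1) ω = B ω * Real.exp ((2*D ω/H^2) * Y ω) := by
          simp only [hM_def, hB_def]
          rw [Finset.sum_Icc_succ_top (Nat.le_add_left 1 k), hg1, Real.exp_add, Real.exp_add]
          ring
        have hconv := convex_exp (2*D ω/H^2) (Y ω) hω.1 hω.2
        have harg : (2*D ω/H^2) * H = 2*D ω/H := by field_simp
        rw [harg] at hconv
        have := mul_le_mul_of_nonneg_left hconv (hB_nonneg ω)
        rw [hsplit]
        simp only [Pi.add_apply, Pi.mul_apply]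
        calc B ω * Real.exp ((2*D ω/H^2) * Y ω)
            ≤ B ω * (1 + Y ω/H * (Real.exp (2*D ω/H) - 1)) := this
        _ = B ω + C ω * Y ω := by simp only [hC_def]; field_simp
      -- conditional expectation chain
      have h1 : μ[M (k+1)|𝔉 k] ≤ᵐ[μ] μ[B + C * Y|𝔉 k] :=
        condExp_mono (hM_int (k+1)) hBCY_int hptw
      have h2 : μ[B + C * Y|𝔉 k] =ᵐ[μ] μ[B|𝔉 k] + μ[C * Y|𝔉 k] :=
        condExp_add hB_int hCY_int _
      have h3 : μ[B|𝔉 k] = B := condExp_of_stronglyMeasurable (𝔉.le k) hB_sm hB_int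
      have h4 : μ[C * Y|𝔉 k] =ᵐ[μ] C * μ[Y|𝔉 k] :=
        condExp_mul_of_stronglyMeasurable_left hC_sm hCY_int hY_int
      have h5 : μ[Y|𝔉 k] = W := rfl
      -- final a.e. bound : B + C * W ≤ M k
      have hfinal : ∀ᵐ ω ∂μ, B ω + C ω * W ω ≤ M k ω := by
        filter_upwards [hw_bdd (k+1) hmem] with ω hωW
        have hp0 : 0 ≤ W ω / H := div_nonneg hωW.1 hH.le
        have hp1 : W ω / H ≤ 1 := by rw [div_le_one hH]; exact hωW.2
        have hhoeff := hoeff_core hp0 hp1 (2*D ω/H)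
        have hBCW : B ω + C ω * W ω =
            B ω * (1 - W ω/H + W ω/H * Real.exp (2*D ω/H)) := by
          simp only [hC_def]; field_simp; ring
        have hBE : B ω * Real.exp (W ω/H * (2*D ω/H) + (2*D ω/H)^2/8) = M k ω := by
          simp only [hB_def]
          rw [mul_assoc, ← Real.exp_add]
          have : (2*D ω*(-W ω) - D ω*D ω/2)/H^2
              + (W ω/H * (2*D ω/H) + (2*D ω/H)^2/8) = 0 := by
            field_simp
            ring
          rw [this, Real.exp_zero, mul_one]
        calc B ω + C ω * W ω = B ω * (1 - W ω/H + W ω/H * Real.exp (2*D ω/H)) := hBCW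
        _ ≤ B ω * Real.exp (W ω/H * (2*D ω/H) + (2*D ω/H)^2/8) :=
            mul_le_mul_of_nonneg_left hhoeff (hB_nonneg ω)
        _ = M k ω := hBE
      -- combine
      refine h1.trans ?_
      filter_upwards [h2, h4, hfinal] with ω e2 e4 e5
      rw [e2]
      simp only [Pi.add_apply, h3, Pi.mul_apply] at *
      rw [e4, h5]
      exact e5

  -- the supermartingale and Ville's inequality
  have hMsup : Supermartingale M 𝔉 μ := supermartingale_nat (fun k => hM_meas k) hM_int hstep
  have hM_nonneg : 0 ≤ M := fun k ω => (hM_pos k ω).le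
  set ε : NNReal := Real.toNNReal (1/δ) with hε_def
  have hεval : (ε : ℝ) = 1/δ := Real.coe_toNNReal _ (by positivity)
  set A := {ω | (ε : ℝ) ≤ (Finset.range (n+1)).sup' Finset.nonempty_range_add_one fun k => M k ω}
    with hA_def
  have hville := ville_ineq hMsup hM_nonneg ε n
  have hM0 : ∫ ω, M 0 ω ∂μ = 1 := by
    have hM0eq : M 0 = fun _ => (1:ℝ) := by
      funext ω
      simp only [hM_def]
      rw [Finset.Icc_eq_empty (by omega : ¬ (1:ℕ) ≤ 0), Finset.sum_empty, Real.exp_zero]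
    rw [hM0eq]
    simp
  rw [hM0, ENNReal.ofReal_one] at hville
  have hA_meas : MeasurableSet A := by
    rw [hA_def]
    exact measurableSet_le measurable_const
      (Finset.measurable_range_sup'' fun k _ => ((hM_meas k).mono (𝔉.le k)).measurable)
  have hεcoe : (ε : ENNReal) = ENNReal.ofReal (1/δ) := rfl
  have hμA : μ A ≤ ENNReal.ofReal δ := by
    have hne0 : (ε : ENNReal) ≠ 0 := by
      rw [hεcoe]
      simp only [ne_eq, ENNReal.ofReal_eq_zero, not_le]
      positivity
    have h1 : μ A ≤ 1 / (ε : ENNReal) := by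
      rw [ENNReal.le_div_iff_mul_le (Or.inl hne0) (Or.inl ENNReal.coe_ne_top)]
      rw [mul_comm]
      exact le_trans (le_of_eq (ENNReal.smul_def ε (μ A)).symm) hville
    calc μ A ≤ 1 / (ε : ENNReal) := h1
    _ = (ENNReal.ofReal (1/δ))⁻¹ := by rw [one_div, hεcoe]
    _ = ENNReal.ofReal ((1/δ)⁻¹) := (ENNReal.ofReal_inv_of_pos (by positivity)).symm
    _ = ENNReal.ofReal δ := by rw [one_div, inv_inv]
  -- complement of A is contained in the good event
  have hsubset : Aᶜ ⊆ {ω | ∀ k ∈ Finset.Icc 1 n,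
      ∑ t ∈ Finset.Icc 1 k, ((v t ω - y t ω) ^ 2 - (u t ω - y t ω) ^ 2) ≤
        H ^ 2 * Real.log (1 / δ)
          - (1 / 2) * ∑ t ∈ Finset.Icc 1 k, (u t ω - v t ω) ^ 2
          + 2 * ∑ t ∈ Finset.Icc 1 k, (u t ω - v t ω) * ξ t ω} := by
    intro ω hω
    simp only [Set.mem_compl_iff, hA_def, Set.mem_setOf_eq, not_le] at hω
    rw [Finset.sup'_lt_iff] at hω
    intro k hk
    obtain ⟨hk1, hkn'⟩ := Finset.mem_Icc.mp hk
    have hMk : M k ω < (ε:ℝ) := hω k (Finset.mem_range.mpr (Nat.lt_succ_of_le hkn'))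
    rw [hεval] at hMk
    have h1δ : (0:ℝ) < 1/δ := by positivity
    have hlog : ∑ t ∈ Finset.Icc 1 k, g t ω < Real.log (1/δ) := by
      rw [← Real.exp_log h1δ] at hMk
      simp only [hM_def] at hMk
      exact Real.exp_lt_exp.mp hMk
    have hsum_eq : ∑ t ∈ Finset.Icc 1 k, g t ω
        = (∑ t ∈ Finset.Icc 1 k, (2*(u t ω - v t ω)*(y t ω - w t ω)
            - (u t ω - v t ω)*(u t ω - v t ω)/2))/H^2 := by
      rw [Finset.sum_div]
      apply Finset.sum_congr rfl
      intro t ht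
      obtain ⟨ht1, ht2⟩ := Finset.mem_Icc.mp ht
      have htn : t ∈ Finset.Icc 1 n := Finset.mem_Icc.mpr ⟨ht1, le_trans ht2 hkn'⟩
      simp only [hg_def, htn, if_true]
    have hkey : ∑ t ∈ Finset.Icc 1 k, (2*(u t ω - v t ω)*(y t ω - w t ω)
        - (u t ω - v t ω)*(u t ω - v t ω)/2) < H^2 * Real.log (1/δ) := by
      rw [hsum_eq, div_lt_iff₀ hH2] at hlog
      linarith
    have hexpand : ∑ t ∈ Finset.Icc 1 k, ((v t ω - y t ω)^2 - (u t ω - y t ω)^2)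
        = (∑ t ∈ Finset.Icc 1 k, (2*(u t ω - v t ω)*(y t ω - w t ω)
            - (u t ω - v t ω)*(u t ω - v t ω)/2))
          - (1/2) * ∑ t ∈ Finset.Icc 1 k, (u t ω - v t ω)^2
          + 2 * ∑ t ∈ Finset.Icc 1 k, (u t ω - v t ω) * ξ t ω := by
      rw [Finset.mul_sum, Finset.mul_sum, ← Finset.sum_sub_distrib, ← Finset.sum_add_distrib]
      apply Finset.sum_congr rfl
      intro t _
      have hξt : ξ t ω = w t ω - v t ω := by
        rw [hξ t]
      rw [hξt]
      ring
    rw [hexpand]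
    linarith
  calc ENNReal.ofReal (1 - δ) = 1 - ENNReal.ofReal δ := by
        rw [ENNReal.ofReal_sub 1 hδ0.le, ENNReal.ofReal_one]
  _ ≤ 1 - μ A := tsub_le_tsub_left hμA 1
  _ = μ Aᶜ := by rw [measure_compl hA_meas (measure_ne_top μ A), measure_univ]
  _ ≤ _ := measure_mono hsubset
end

section
/- Let d, n ≥ 1, λ > 0, φ₁, …, φ_n ∈ ℝ^d, φ ∈ ℝ^d, and ε₁, …, ε_n ∈ ℝ. Let Λ = λ·I_d + Σ_{τ=1}^n φ_τ φ_τᵀ (a positive definite d×d matrix). Then |φᵀ Λ⁻¹ (Σ_{τ=1}^n ε_τ φ_τ)| ≤ √d · √(Σ_{τ=1}^n ε_τ²) · √(φᵀ Λ⁻¹ φ). -/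
open Matrix BigOperators

section aux
variable {d : ℕ}

lemma mulVec_vecMulVec (u x : Fin d → ℝ) : vecMulVec u u *ᵥ x = (u ⬝ᵥ x) • u := by
  ext i
  simp [mulVec, dotProduct, vecMulVec_apply, Finset.mul_sum, Finset.sum_mul, mul_comm,
    mul_left_comm]

lemma psd_vecMulVec (u : Fin d → ℝ) : (vecMulVec u u).PosSemidef := by
  rw [posSemidef_iff_dotProduct_mulVec]
  constructor
  · ext i j
    simp [vecMulVec_apply, conjTranspose_apply, mul_comm]
  · intro x
    rw [star_trivial, mulVec_vecMulVec, dotProduct_smul, smul_eq_mul, dotProduct_comm]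
    exact mul_self_nonneg _

lemma dot_symm (M : Matrix (Fin d) (Fin d) ℝ) (hM : M.IsHermitian) (a b : Fin d → ℝ) :
    a ⬝ᵥ (M *ᵥ b) = b ⬝ᵥ (M *ᵥ a) := by
  have ht : Mᵀ = M := by
    rw [← conjTranspose_eq_transpose_of_trivial, hM.eq]
  rw [dotProduct_mulVec, ← mulVec_transpose, ht, dotProduct_comm]

lemma cs_psd (M : Matrix (Fin d) (Fin d) ℝ) (hM : M.PosSemidef) (x y : Fin d → ℝ) :
    (x ⬝ᵥ (M *ᵥ y)) ^ 2 ≤ (x ⬝ᵥ (M *ᵥ x)) * (y ⬝ᵥ (M *ᵥ y)) := by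
  have key : ∀ t : ℝ,
      0 ≤ (y ⬝ᵥ (M *ᵥ y)) * (t * t) + (2 * (x ⬝ᵥ (M *ᵥ y))) * t + x ⬝ᵥ (M *ᵥ x) := by
    intro t
    have h0 := hM.dotProduct_mulVec_nonneg (x + t • y)
    rw [star_trivial] at h0
    have hex : (x + t • y) ⬝ᵥ (M *ᵥ (x + t • y)) =
        (y ⬝ᵥ (M *ᵥ y)) * (t * t) + (2 * (x ⬝ᵥ (M *ᵥ y))) * t + x ⬝ᵥ (M *ᵥ x) := by
      rw [mulVec_add, dotProduct_add, add_dotProduct, add_dotProduct,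
        mulVec_smul, dotProduct_smul, smul_dotProduct, smul_dotProduct,
        dotProduct_smul, dot_symm M hM.1 y x]
      simp only [smul_eq_mul]; ring
    linarith [hex ▸ h0]
  have hdis := discrim_le_zero key
  rw [discrim] at hdis
  nlinarith [hdis]

lemma trace_nonneg_psd (M : Matrix (Fin d) (Fin d) ℝ) (hM : M.PosSemidef) : 0 ≤ M.trace := by
  rw [Matrix.trace]
  refine Finset.sum_nonneg fun i _ => ?_
  have := hM.dotProduct_mulVec_nonneg (Pi.single i 1)
  simpa [mulVec, dotProduct, Pi.single_apply] using this

lemma trace_mul_vecMulVec (M : Matrix (Fin d) (Fin d) ℝ) (u : Fin d → ℝ) :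
    (M * vecMulVec u u).trace = u ⬝ᵥ (M *ᵥ u) := by
  simp only [Matrix.trace, Matrix.diag, Matrix.mul_apply, vecMulVec_apply, dotProduct, mulVec,
    dotProduct, Finset.mul_sum]
  exact Finset.sum_congr rfl fun i _ => Finset.sum_congr rfl fun j _ => by ring

end aux

theorem stmt8 (d n : ℕ) (hd : 1 ≤ d) (hn : 1 ≤ n) (lam : ℝ) (hlam : 0 < lam)
    (φs : Fin n → Fin d → ℝ) (φ : Fin d → ℝ) (ε : Fin n → ℝ)
    (Λ : Matrix (Fin d) (Fin d) ℝ)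
    (hΛ : Λ = lam • (1 : Matrix (Fin d) (Fin d) ℝ) + ∑ τ, vecMulVec (φs τ) (φs τ)) :
    |φ ⬝ᵥ (Λ⁻¹ *ᵥ ∑ τ, ε τ • φs τ)| ≤
      Real.sqrt d * Real.sqrt (∑ τ, (ε τ) ^ 2) * Real.sqrt (φ ⬝ᵥ (Λ⁻¹ *ᵥ φ)) := by
  have hsumpsd : (∑ τ, vecMulVec (φs τ) (φs τ)).PosSemidef :=
    Finset.sum_induction _ _ (fun a b ha hb => ha.add hb) Matrix.PosSemidef.zero
      (fun τ _ => psd_vecMulVec _)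
  have hΛpd : Λ.PosDef := by
    rw [hΛ, smul_one_eq_diagonal]
    exact (Matrix.PosDef.diagonal (fun _ => hlam)).add_posSemidef hsumpsd
  have hinv : (Λ⁻¹).PosDef := hΛpd.inv
  have hpsd : (Λ⁻¹).PosSemidef := hinv.posSemidef
  -- trace bound
  have hsum : ∑ τ, φs τ ⬝ᵥ (Λ⁻¹ *ᵥ φs τ) ≤ (d : ℝ) := by
    have h1 : (Λ⁻¹ * Λ).trace = (d : ℝ) := by
      rw [Matrix.nonsing_inv_mul _ ((Matrix.isUnit_iff_isUnit_det Λ).mp hΛpd.isUnit),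
        trace_one]
      simp
    have h2 : (Λ⁻¹ * Λ).trace = lam * (Λ⁻¹).trace + ∑ τ, φs τ ⬝ᵥ (Λ⁻¹ *ᵥ φs τ) := by
      have hsplit : Λ⁻¹ * Λ = Λ⁻¹ * (lam • 1) + ∑ τ, Λ⁻¹ * vecMulVec (φs τ) (φs τ) := by
        rw [← Matrix.mul_sum, ← Matrix.mul_add, ← hΛ]
      rw [hsplit, trace_add, trace_sum]
      congr 1
      · rw [Matrix.mul_smul, Matrix.mul_one, trace_smul, smul_eq_mul]
      · exact Finset.sum_congr rfl fun τ _ => trace_mul_vecMulVec _ _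
    have h3 : 0 ≤ lam * (Λ⁻¹).trace :=
      mul_nonneg hlam.le (trace_nonneg_psd _ hpsd)
    linarith
  set a : Fin n → ℝ := fun τ => φ ⬝ᵥ (Λ⁻¹ *ᵥ φs τ) with ha
  have hlhs : φ ⬝ᵥ (Λ⁻¹ *ᵥ ∑ τ, ε τ • φs τ) = ∑ τ, ε τ * a τ := by
    have hmv : Λ⁻¹ *ᵥ (∑ τ, ε τ • φs τ) = ∑ τ, ε τ • (Λ⁻¹ *ᵥ φs τ) := by
      rw [← Matrix.mulVecLin_apply, map_sum]
      exact Finset.sum_congr rfl fun τ _ => by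
        rw [Matrix.mulVecLin_apply, mulVec_smul]
    rw [hmv]
    simp only [ha, dotProduct, Finset.sum_apply, Pi.smul_apply, smul_eq_mul, Finset.mul_sum]
    rw [Finset.sum_comm]
    exact Finset.sum_congr rfl fun τ _ => Finset.sum_congr rfl fun i _ => by ring
  rw [hlhs]
  have hφ0 : 0 ≤ φ ⬝ᵥ (Λ⁻¹ *ᵥ φ) := by simpa using hpsd.dotProduct_mulVec_nonneg φ
  have habs : |∑ τ, ε τ * a τ| ≤ Real.sqrt (∑ τ, ε τ ^ 2) * Real.sqrt (∑ τ, a τ ^ 2) := by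
    have h := Finset.sum_mul_sq_le_sq_mul_sq Finset.univ ε a
    have h2 := Real.sqrt_le_sqrt h
    rwa [Real.sqrt_sq_eq_abs, Real.sqrt_mul (by positivity)] at h2
  have hA : ∑ τ, a τ ^ 2 ≤ (d : ℝ) * (φ ⬝ᵥ (Λ⁻¹ *ᵥ φ)) := by
    have step : ∑ τ, a τ ^ 2 ≤
        (φ ⬝ᵥ (Λ⁻¹ *ᵥ φ)) * ∑ τ, φs τ ⬝ᵥ (Λ⁻¹ *ᵥ φs τ) := by
      rw [Finset.mul_sum]
      exact Finset.sum_le_sum fun τ _ => cs_psd _ hpsd φ (φs τ)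
    have hsnn : (0:ℝ) ≤ ∑ τ, φs τ ⬝ᵥ (Λ⁻¹ *ᵥ φs τ) :=
      Finset.sum_nonneg fun τ _ => by simpa using hpsd.dotProduct_mulVec_nonneg (φs τ)
    nlinarith
  have hsq : Real.sqrt (∑ τ, a τ ^ 2) ≤ Real.sqrt d * Real.sqrt (φ ⬝ᵥ (Λ⁻¹ *ᵥ φ)) := by
    have := Real.sqrt_le_sqrt hA
    rwa [Real.sqrt_mul (by positivity)] at this
  calc |∑ τ, ε τ * a τ| ≤ Real.sqrt (∑ τ, ε τ ^ 2) * Real.sqrt (∑ τ, a τ ^ 2) := habs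
    _ ≤ Real.sqrt (∑ τ, ε τ ^ 2) * (Real.sqrt d * Real.sqrt (φ ⬝ᵥ (Λ⁻¹ *ᵥ φ))) :=
        mul_le_mul_of_nonneg_left hsq (Real.sqrt_nonneg _)
    _ = Real.sqrt d * Real.sqrt (∑ τ, ε τ ^ 2) * Real.sqrt (φ ⬝ᵥ (Λ⁻¹ *ᵥ φ)) := by ring
end

section
/- Let d ≥ 1 and let (φ_t)_{t≥1} be a sequence in ℝ^d with ‖φ_t‖₂ ≤ 1 for all t. Let Λ₀ ∈ ℝ^{d×d} be a symmetric positive definite matrix with smallest eigenvalue λ_min(Λ₀) ≥ 1, and for t ≥ 1 set Λ_t = Λ₀ + Σ_{j=1}^t φ_j φ_jᵀ. Then for every t ≥ 1: log(det(Λ_t)/det(Λ₀)) ≤ Σ_{j=1}^t φ_jᵀ Λ_{j−1}⁻¹ φ_j ≤ 2·log(det(Λ_t)/det(Λ₀)). -/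
open Matrix BigOperators

lemma myscalar1 {x : ℝ} (hx : 0 ≤ x) : Real.log (1 + x) ≤ x := by
  have := Real.log_le_sub_one_of_pos (x := 1 + x) (by linarith)
  linarith

lemma myscalar2 {x : ℝ} (hx : 0 ≤ x) (hx1 : x ≤ 1) : x ≤ 2 * Real.log (1 + x) := by
  have hc := strictConcaveOn_log_Ioi.concaveOn.2
    (Set.mem_Ioi.mpr (one_pos : (0:ℝ) < 1)) (Set.mem_Ioi.mpr (two_pos : (0:ℝ) < 2))
    (by linarith : (0:ℝ) ≤ 1 - x) hx (by ring)
  have h2 : Real.log 2 > 0.6931471803 := Real.log_two_gt_d9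
  have hpt : (1 - x) • (1:ℝ) + x • (2:ℝ) = 1 + x := by simp; ring
  rw [hpt] at hc
  simp only [smul_eq_mul, Real.log_one, mul_zero, zero_add] at hc
  nlinarith

lemma myvvPSD {d : ℕ} (v : Fin d → ℝ) : (vecMulVec v v).PosSemidef := by
  rw [vecMulVec_eq Unit]
  have : replicateRow Unit v = (replicateCol Unit v)ᴴ := by ext i j; simp [replicateCol, replicateRow]
  rw [this]
  exact posSemidef_self_mul_conjTranspose _

lemma myPSDsum {d : ℕ} {s : Finset ℕ} (f : ℕ → Matrix (Fin d) (Fin d) ℝ)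
    (h : ∀ j ∈ s, (f j).PosSemidef) : (∑ j ∈ s, f j).PosSemidef := by
  classical
  induction s using Finset.induction_on with
  | empty => simpa using Matrix.PosSemidef.zero
  | insert _ _ hx ih =>
    rw [Finset.sum_insert hx]
    exact ((h _ (Finset.mem_insert_self _ _)).add
      (ih fun j hj => h j (Finset.mem_insert_of_mem hj)))

lemma myBase {d : ℕ} (Λ₀ : Matrix (Fin d) (Fin d) ℝ) (hPD : Λ₀.PosDef)
    (hmin : ∀ i, 1 ≤ hPD.1.eigenvalues i) : (Λ₀ - 1).PosSemidef := by
  have hU : (hPD.1.eigenvectorUnitary : Matrix (Fin d) (Fin d) ℝ) *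
      star (hPD.1.eigenvectorUnitary : Matrix (Fin d) (Fin d) ℝ) = 1 :=
    Matrix.mem_unitaryGroup_iff.mp hPD.1.eigenvectorUnitary.2
  have hspec := hPD.1.spectral_theorem
  rw [Unitary.conjStarAlgAut_apply] at hspec
  have key : Λ₀ - 1 = (hPD.1.eigenvectorUnitary : Matrix (Fin d) (Fin d) ℝ) *
      (diagonal (fun i => hPD.1.eigenvalues i - 1)) *
      (hPD.1.eigenvectorUnitary : Matrix (Fin d) (Fin d) ℝ)ᴴ := by
    have : diagonal (fun i => hPD.1.eigenvalues i - 1)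
        = diagonal (RCLike.ofReal ∘ hPD.1.eigenvalues) - 1 := by
      simp [diagonal_sub, ← Matrix.diagonal_one]
    rw [this, Matrix.mul_sub, Matrix.sub_mul, Matrix.mul_one,
      ← star_eq_conjTranspose, ← hspec, hU]
  rw [key]
  exact (Matrix.PosSemidef.diagonal (fun i => by simpa using hmin i)).mul_mul_conjTranspose_same _

open scoped MatrixOrder in
lemma myInv {d : ℕ} (A : Matrix (Fin d) (Fin d) ℝ) (hA : A.PosDef)
    (h1 : (A - 1).PosSemidef) : ((1 : Matrix (Fin d) (Fin d) ℝ) - A⁻¹).PosSemidef := by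
  have hAinv : A⁻¹.PosDef := hA.inv
  set S := CFC.sqrt A⁻¹ with hS
  have hSS : S * S = A⁻¹ := CFC.sqrt_mul_sqrt_self A⁻¹ hAinv.posSemidef.nonneg
  have hSH : Sᴴ = S := (CFC.sqrt_nonneg A⁻¹).posSemidef.1
  have hAunit : IsUnit A.det := hA.det_pos.ne'.isUnit
  have hSunit : IsUnit S.det := by
    have hdet : S.det * S.det = A⁻¹.det := by rw [← det_mul, hSS]
    have h2 : A⁻¹.det ≠ 0 := hAinv.det_pos.ne'
    have h3 : S.det ≠ 0 := fun h => h2 (by rw [← hdet, h, mul_zero])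
    exact h3.isUnit
  have hSAS : S * A * S = 1 := by
    have h3 : S * A * (S * S) = S := by
      rw [hSS, Matrix.mul_assoc, mul_nonsing_inv _ hAunit, Matrix.mul_one]
    have := congrArg (· * S⁻¹) h3
    simpa [Matrix.mul_assoc, mul_nonsing_inv _ hSunit] using this
  have key : (1 : Matrix (Fin d) (Fin d) ℝ) - A⁻¹ = S * (A - 1) * Sᴴ := by
    rw [hSH, Matrix.mul_sub, Matrix.sub_mul, Matrix.mul_one, hSAS, hSS]
  rw [key]
  exact h1.mul_mul_conjTranspose_same _

lemma mydet {d : ℕ} (A : Matrix (Fin d) (Fin d) ℝ) (hA : IsUnit A.det) (u v : Fin d → ℝ) :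
    (A + vecMulVec u v).det = A.det * (1 + v ⬝ᵥ (A⁻¹ *ᵥ u)) := by
  rw [vecMulVec_eq Unit, det_add_replicateCol_mul_replicateRow hA,
    det_unique (1 + replicateRow Unit v * A⁻¹ * replicateCol Unit u)]
  congr 1
  simp only [Pi.add_apply, Matrix.add_apply, Matrix.one_apply_eq, Matrix.mul_apply,
    Matrix.replicateRow, Matrix.replicateCol, dotProduct, mulVec, of_apply, Finset.sum_mul, mul_assoc]
  rw [Finset.sum_comm]
  simp [Finset.mul_sum]

theorem stmt11 (d : ℕ) (hd : 1 ≤ d)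
    (φ : ℕ → Fin d → ℝ) (hφ : ∀ t, Real.sqrt (∑ i, (φ t i) ^ 2) ≤ 1)
    (Λ₀ : Matrix (Fin d) (Fin d) ℝ) (hPD : Λ₀.PosDef)
    (hmin : ∀ i, 1 ≤ hPD.1.eigenvalues i)
    (Λ : ℕ → Matrix (Fin d) (Fin d) ℝ)
    (hΛ : ∀ t, Λ t = Λ₀ + ∑ j ∈ Finset.Icc 1 t, vecMulVec (φ j) (φ j)) :
    ∀ t, 1 ≤ t →
      Real.log ((Λ t).det / Λ₀.det)
          ≤ (∑ j ∈ Finset.Icc 1 t, φ j ⬝ᵥ ((Λ (j - 1))⁻¹ *ᵥ φ j)) ∧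
        (∑ j ∈ Finset.Icc 1 t, φ j ⬝ᵥ ((Λ (j - 1))⁻¹ *ᵥ φ j))
          ≤ 2 * Real.log ((Λ t).det / Λ₀.det) := by
  have hPSDsum : ∀ t, (∑ j ∈ Finset.Icc 1 t, vecMulVec (φ j) (φ j)).PosSemidef :=
    fun t => myPSDsum _ (fun j _ => myvvPSD (φ j))
  have hPos : ∀ t, (Λ t).PosDef := fun t => by
    rw [hΛ t]; exact hPD.add_posSemidef (hPSDsum t)
  have hone : ∀ t, ((Λ t) - 1).PosSemidef := fun t => by
    have h : Λ t - 1 = (Λ₀ - 1) + ∑ j ∈ Finset.Icc 1 t, vecMulVec (φ j) (φ j) := by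
      rw [hΛ t]; abel
    rw [h]
    exact (myBase Λ₀ hPD hmin).add (hPSDsum t)
  have hx0 : ∀ j : ℕ, 0 ≤ φ j ⬝ᵥ ((Λ (j - 1))⁻¹ *ᵥ φ j) := fun j => by
    have := ((hPos (j-1)).inv).posSemidef.dotProduct_mulVec_nonneg (φ j)
    simpa using this
  have hφ2 : ∀ j, (φ j) ⬝ᵥ (φ j) ≤ 1 := fun j => by
    have h1 := hφ j
    have h2 : (0:ℝ) ≤ ∑ i, (φ j i)^2 := Finset.sum_nonneg fun i _ => sq_nonneg _
    have h3 : ∑ i, (φ j i)^2 ≤ 1 := by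
      nlinarith [Real.sq_sqrt h2, Real.sqrt_nonneg (∑ i, (φ j i)^2)]
    simpa [dotProduct, sq] using h3
  have hx1 : ∀ j : ℕ, φ j ⬝ᵥ ((Λ (j - 1))⁻¹ *ᵥ φ j) ≤ 1 := fun j => by
    have hinv := myInv _ (hPos (j-1)) (hone (j-1))
    have h := hinv.dotProduct_mulVec_nonneg (φ j)
    have h2 : (0:ℝ) ≤ φ j ⬝ᵥ (φ j) - φ j ⬝ᵥ ((Λ (j - 1))⁻¹ *ᵥ φ j) := by
      simpa [sub_mulVec, dotProduct_sub, one_mulVec] using h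
    linarith [hφ2 j]
  have hrec : ∀ k : ℕ,
      (Λ (k+1)).det = (Λ k).det * (1 + φ (k+1) ⬝ᵥ ((Λ k)⁻¹ *ᵥ φ (k+1))) := fun k => by
    have hstep : Λ (k+1) = Λ k + vecMulVec (φ (k+1)) (φ (k+1)) := by
      rw [hΛ (k+1), hΛ k, Finset.sum_Icc_succ_top (Nat.succ_le_succ (Nat.zero_le k)), add_assoc]
    rw [hstep, mydet _ (hPos k).det_pos.ne'.isUnit]
  have hprod : ∀ t, (Λ t).det
      = Λ₀.det * ∏ j ∈ Finset.Icc 1 t, (1 + φ j ⬝ᵥ ((Λ (j - 1))⁻¹ *ᵥ φ j)) := by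
    intro t
    induction t with
    | zero => simp [hΛ 0]
    | succ k ih =>
      rw [hrec k, ih, Finset.prod_Icc_succ_top (Nat.succ_le_succ (Nat.zero_le k)), mul_assoc]
      simp
  intro t _
  have hlog : Real.log ((Λ t).det / Λ₀.det)
      = ∑ j ∈ Finset.Icc 1 t, Real.log (1 + φ j ⬝ᵥ ((Λ (j - 1))⁻¹ *ᵥ φ j)) := by
    rw [hprod t, mul_comm, mul_div_assoc, div_self hPD.det_pos.ne', mul_one]
    exact Real.log_prod (fun j _ => by have := hx0 j; positivity)
  constructor
  · rw [hlog]
    exact Finset.sum_le_sum fun j _ => myscalar1 (hx0 j)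
  · rw [hlog, Finset.mul_sum]
    exact Finset.sum_le_sum fun j _ => myscalar2 (hx0 j) (hx1 j)
end

section
/- Let S be a set, 𝒜 a nonempty finite set, d ≥ 1, and φ : S × 𝒜 → ℝ^d with ‖φ(s,a)‖₂ ≤ 1 for all (s,a). Fix H > 0, L ≥ 0, B ≥ 0, λ > 0, and ε > 0. For w ∈ ℝ^d with ‖w‖₂ ≤ L, β ∈ [0, B], and symmetric positive definite Λ ∈ ℝ^{d×d} with λ_min(Λ) ≥ λ, define V_{w,β,Λ} : S → ℝ by V_{w,β,Λ}(s) = min{ max_{a∈𝒜} ( wᵀφ(s,a) + β·√(φ(s,a)ᵀ Λ⁻¹ φ(s,a)) ), H }. Then there exists a finite set 𝒩 of functions from S to ℝ with log|𝒩| ≤ d·log(1 + 4L/ε) + d²·log(1 + 8√d·B²/(λε²)) such that for every admissible triple (w, β, Λ) there is V′ ∈ 𝒩 with sup_{s∈S} |V_{w,β,Λ}(s) − V′(s)| ≤ ε. -/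
open Matrix BigOperators
open scoped ENNReal

section Helpers

lemma abs_dot_le {ι : Type*} [Fintype ι] (u x : ι → ℝ) :
    |∑ i, u i * x i| ≤ Real.sqrt (∑ i, u i ^ 2) * Real.sqrt (∑ i, x i ^ 2) := by
  rw [← Real.sqrt_mul (by positivity)]
  exact Real.abs_le_sqrt (Finset.sum_mul_sq_le_sq_mul_sq Finset.univ u x)

lemma abs_sqrt_sub_sqrt_le (s t : ℝ) :
    |Real.sqrt s - Real.sqrt t| ≤ Real.sqrt |s - t| := by
  wlog h : t ≤ s with H
  · rw [abs_sub_comm, abs_sub_comm s t]; exact H t s (le_of_not_ge h)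
  rw [abs_of_nonneg (sub_nonneg.2 (Real.sqrt_le_sqrt h)), abs_of_nonneg (sub_nonneg.2 h)]
  rcases le_total t 0 with ht | ht
  · rw [Real.sqrt_eq_zero'.2 ht, sub_zero]
    exact Real.sqrt_le_sqrt (by linarith)
  · rw [sub_le_iff_le_add]
    have hx : 0 ≤ s - t := by linarith
    have h1 := Real.sq_sqrt hx
    have h2 := Real.sq_sqrt ht
    have h3 := Real.sqrt_nonneg (s - t)
    have h4 := Real.sqrt_nonneg t
    have h5 : 0 ≤ Real.sqrt (s - t) * Real.sqrt t := mul_nonneg h3 h4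
    have key : s ≤ (Real.sqrt (s - t) + Real.sqrt t) ^ 2 := by nlinarith
    calc Real.sqrt s ≤ Real.sqrt ((Real.sqrt (s - t) + Real.sqrt t) ^ 2) :=
          Real.sqrt_le_sqrt key
      _ = Real.sqrt (s - t) + Real.sqrt t := Real.sqrt_sq (by positivity)

lemma abs_min_sub_min_le (a b c : ℝ) : |min a c - min b c| ≤ |a - b| := by
  have h1 := le_abs_self (a - b)
  have h2 := neg_abs_le (a - b)
  rcases le_total a c with h3 | h3 <;> rcases le_total b c with h4 | h4 <;>
    rw [abs_le] <;> constructor <;>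
    simp only [min_eq_left, min_eq_right, h3, h4] <;> linarith

lemma abs_sup_sub_sup_le {A : Type*} [Fintype A] [Nonempty A] (f g : A → ℝ) (e : ℝ)
    (h : ∀ a, |f a - g a| ≤ e) :
    |Finset.univ.sup' Finset.univ_nonempty f - Finset.univ.sup' Finset.univ_nonempty g| ≤ e := by
  have hfg : Finset.univ.sup' Finset.univ_nonempty f ≤
      Finset.univ.sup' Finset.univ_nonempty g + e := by
    apply Finset.sup'_le
    intro a _
    have := abs_le.1 (h a)
    have := Finset.le_sup' g (Finset.mem_univ a)
    linarith
  have hgf : Finset.univ.sup' Finset.univ_nonempty g ≤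
      Finset.univ.sup' Finset.univ_nonempty f + e := by
    apply Finset.sup'_le
    intro a _
    have := abs_le.1 (h a)
    have := Finset.le_sup' f (Finset.mem_univ a)
    linarith
  rw [abs_le]; constructor <;> linarith

end Helpers

section Quad

lemma dot_flip {d : ℕ} (M : Matrix (Fin d) (Fin d) ℝ) (v z : Fin d → ℝ) :
    v ⬝ᵥ (M *ᵥ z) = (star M *ᵥ v) ⬝ᵥ z := by
  rw [Matrix.star_eq_conjTranspose, Matrix.conjTranspose_eq_transpose_of_trivial,
    Matrix.mulVec_transpose, Matrix.dotProduct_mulVec]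

lemma quad_lower {d : ℕ} {Λ : Matrix (Fin d) (Fin d) ℝ} (hH : Λ.IsHermitian)
    {lam : ℝ} (hev : ∀ i, lam ≤ hH.eigenvalues i) (x : Fin d → ℝ) :
    lam * (x ⬝ᵥ x) ≤ x ⬝ᵥ (Λ *ᵥ x) := by
  classical
  set U : Matrix (Fin d) (Fin d) ℝ := (hH.eigenvectorUnitary : Matrix (Fin d) (Fin d) ℝ) with hUdef
  have hU1 : U * star U = 1 := Matrix.mem_unitaryGroup_iff.mp hH.eigenvectorUnitary.2
  have hst : Λ = U * Matrix.diagonal hH.eigenvalues * star U := by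
    have h := hH.spectral_theorem
    simpa using h
  set y : Fin d → ℝ := star U *ᵥ x with hy
  have hUy : U *ᵥ y = x := by
    rw [hy, Matrix.mulVec_mulVec, hU1, Matrix.one_mulVec]
  have hyy : y ⬝ᵥ y = x ⬝ᵥ x := by
    calc y ⬝ᵥ y = (star U *ᵥ x) ⬝ᵥ y := by rw [hy]
      _ = x ⬝ᵥ (U *ᵥ y) := (dot_flip U x y).symm
      _ = x ⬝ᵥ x := by rw [hUy]
  have hq : x ⬝ᵥ (Λ *ᵥ x) = ∑ i, y i * (hH.eigenvalues i * y i) := by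
    calc x ⬝ᵥ (Λ *ᵥ x)
        = x ⬝ᵥ (U *ᵥ (Matrix.diagonal hH.eigenvalues *ᵥ (star U *ᵥ x))) := by
          rw [Matrix.mulVec_mulVec, Matrix.mulVec_mulVec, ← hst]
      _ = (star U *ᵥ x) ⬝ᵥ (Matrix.diagonal hH.eigenvalues *ᵥ y) := by
          rw [dot_flip, hy]
      _ = ∑ i, y i * (hH.eigenvalues i * y i) := by
          simp [dotProduct, Matrix.mulVec_diagonal, hy]
  rw [hq, ← hyy]
  have : lam * (y ⬝ᵥ y) = ∑ i, lam * (y i * y i) := by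
    simp [dotProduct, Finset.mul_sum]
  rw [this]
  apply Finset.sum_le_sum
  intro i _
  have h1 : lam * (y i * y i) ≤ hH.eigenvalues i * (y i * y i) :=
    mul_le_mul_of_nonneg_right (hev i) (mul_self_nonneg _)
  linarith [h1]

end Quad

lemma inv_frob_bound {d : ℕ} {Λ : Matrix (Fin d) (Fin d) ℝ} (hPD : Λ.PosDef)
    {lam : ℝ} (hlam : 0 < lam) (hev : ∀ i, lam ≤ hPD.1.eigenvalues i) :
    ∑ p : Fin d × Fin d, (Λ⁻¹ p.1 p.2) ^ 2 ≤ d / lam ^ 2 := by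
  classical
  have hdet : IsUnit Λ.det := hPD.det_pos.ne'.isUnit
  have hinv : ∀ y : Fin d → ℝ, Λ *ᵥ (Λ⁻¹ *ᵥ y) = y := by
    intro y; rw [Matrix.mulVec_mulVec, Matrix.mul_nonsing_inv _ hdet, Matrix.one_mulVec]
  have hcol : ∀ j, ∑ i, (Λ⁻¹ i j) ^ 2 ≤ 1 / lam ^ 2 := by
    intro j
    set y : Fin d → ℝ := Pi.single j 1 with hydef
    set z : Fin d → ℝ := Λ⁻¹ *ᵥ y with hz
    set Ss : ℝ := ∑ i, z i ^ 2 with hSs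
    have hzz : z ⬝ᵥ z = Ss := by simp [dotProduct, hSs, sq]
    have h1 : lam * (z ⬝ᵥ z) ≤ z ⬝ᵥ (Λ *ᵥ z) := quad_lower hPD.1 hev z
    have h2 : Λ *ᵥ z = y := hinv y
    have hy2 : ∑ i, y i ^ 2 = 1 := by
      simp [hydef, Pi.single_apply, sq]
    have h3 : z ⬝ᵥ y ≤ Real.sqrt Ss := by
      have := le_trans (le_abs_self _) (abs_dot_le z y)
      rwa [hy2, Real.sqrt_one, mul_one, ← hSs] at this
    have hS0 : 0 ≤ Ss := by positivity
    have hsq : Real.sqrt Ss ^ 2 = Ss := Real.sq_sqrt hS0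
    have hA : lam * Ss ≤ Real.sqrt Ss := by
      have e1 : lam * Ss = lam * (z ⬝ᵥ z) := by rw [hzz]
      rw [e1]
      refine le_trans h1 ?_
      rw [h2]
      exact h3
    have hfin : lam ^ 2 * Ss ≤ 1 := by
      nlinarith [sq_nonneg (lam * Real.sqrt Ss - 1), Real.sqrt_nonneg Ss]
    have : ∑ i, (Λ⁻¹ i j) ^ 2 = Ss := by
      rw [hSs]
      apply Finset.sum_congr rfl
      intro i _
      congr 1
      simp [hz, hydef]
    rw [this, le_div_iff₀ (by positivity : (0:ℝ) < lam ^ 2)]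
    linarith
  calc ∑ p : Fin d × Fin d, (Λ⁻¹ p.1 p.2) ^ 2
      = ∑ i, ∑ j, (Λ⁻¹ i j) ^ 2 := Fintype.sum_prod_type _
    _ = ∑ j, ∑ i, (Λ⁻¹ i j) ^ 2 := Finset.sum_comm
    _ ≤ ∑ _j : Fin d, 1 / lam ^ 2 := Finset.sum_le_sum fun j _ => hcol j
    _ = d / lam ^ 2 := by simp [Finset.sum_const]; ring

lemma net_lemma (ι : Type) [Fintype ι] [Nonempty ι] (R r : ℝ) (hR : 0 ≤ R) (hr : 0 < r) :
    ∃ T : Finset (EuclideanSpace ℝ ι), T.Nonempty ∧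
      (T.card : ℝ) ≤ (1 + 2 * R / r) ^ (Fintype.card ι) ∧
      ∀ x : EuclideanSpace ℝ ι, ‖x‖ ≤ R → ∃ y ∈ T, ‖x - y‖ ≤ r := by
  classical
  set n := Fintype.card ι with hn
  set E := EuclideanSpace ℝ ι
  set c : ℝ≥0∞ := ENNReal.ofReal (Real.sqrt Real.pi ^ n / Real.Gamma (n / 2 + 1)) with hc
  have hc0 : c ≠ 0 := by
    rw [hc, Ne, ENNReal.ofReal_eq_zero, not_le]
    have h1 : 0 < Real.sqrt Real.pi := Real.sqrt_pos.2 Real.pi_pos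
    have h2 : 0 < Real.Gamma ((n : ℝ) / 2 + 1) := Real.Gamma_pos_of_pos (by positivity)
    positivity
  have hcT : c ≠ ⊤ := ENNReal.ofReal_ne_top
  have hvol : ∀ (x : E) (s : ℝ),
      MeasureTheory.volume (Metric.ball x s) = ENNReal.ofReal s ^ n * c :=
    fun x s => EuclideanSpace.volume_ball ι x s
  have hb : (0:ℝ) < 1 + 2 * R / r := by positivity
  -- cardinality bound for separated finsets inside the ball
  have key : ∀ F : Finset E, (↑F ⊆ Metric.closedBall (0 : E) R) →
      ((↑F : Set E).Pairwise fun a b => r ≤ dist a b) →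
      (F.card : ℝ) ≤ (1 + 2 * R / r) ^ n := by
    intro F hFsub hFsep
    have hdisj : (↑F : Set E).PairwiseDisjoint fun y => Metric.ball y (r / 2) := by
      intro a ha b hb hab
      apply Metric.ball_disjoint_ball
      have := hFsep ha hb hab
      linarith
    have hmeas := MeasureTheory.measure_biUnion_finset (μ := (MeasureTheory.volume : MeasureTheory.Measure E)) hdisj
      (fun y _ => Metric.isOpen_ball.measurableSet)
    have hsub : (⋃ y ∈ F, Metric.ball y (r / 2)) ⊆ Metric.ball (0 : E) (R + r / 2) := by
      apply Set.iUnion₂_subset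
      intro y hy
      apply Metric.ball_subset_ball'
      have : dist y 0 ≤ R := Metric.mem_closedBall.mp (hFsub hy)
      linarith
    have hle : (F.card : ℝ≥0∞) * (ENNReal.ofReal (r / 2) ^ n * c) ≤
        ENNReal.ofReal (R + r / 2) ^ n * c := by
      calc (F.card : ℝ≥0∞) * (ENNReal.ofReal (r / 2) ^ n * c)
          = ∑ y ∈ F, MeasureTheory.volume (Metric.ball y (r / 2)) := by
            rw [Finset.sum_congr rfl fun y _ => hvol y (r / 2), Finset.sum_const,
              nsmul_eq_mul]
        _ = MeasureTheory.volume (⋃ y ∈ F, Metric.ball y (r / 2)) := hmeas.symm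
        _ ≤ MeasureTheory.volume (Metric.ball (0 : E) (R + r / 2)) :=
            MeasureTheory.measure_mono hsub
        _ = ENNReal.ofReal (R + r / 2) ^ n * c := hvol 0 (R + r / 2)
    rw [← mul_assoc, ENNReal.mul_le_mul_iff_left hc0 hcT] at hle
    have hle2 : ENNReal.ofReal ((F.card : ℝ) * (r / 2) ^ n) ≤
        ENNReal.ofReal ((R + r / 2) ^ n) := by
      rw [ENNReal.ofReal_mul (by positivity), ENNReal.ofReal_pow (by positivity),
        ENNReal.ofReal_natCast, ENNReal.ofReal_pow (by positivity)]
      exact hle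
    have hle3 : (F.card : ℝ) * (r / 2) ^ n ≤ (R + r / 2) ^ n :=
      (ENNReal.ofReal_le_ofReal_iff (by positivity)).mp hle2
    have heq : 1 + 2 * R / r = (R + r / 2) / (r / 2) := by
      field_simp
      ring
    rw [heq, div_pow, le_div_iff₀ (by positivity)]
    exact hle3
  -- Zorn's lemma: a maximal separated subset
  have hzorn : ∀ ch ⊆ {s : Set E | s ⊆ Metric.closedBall (0 : E) R ∧
      s.Pairwise fun a b => r ≤ dist a b}, IsChain (· ⊆ ·) ch →
      ∃ ub ∈ {s : Set E | s ⊆ Metric.closedBall (0 : E) R ∧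
        s.Pairwise fun a b => r ≤ dist a b}, ∀ s ∈ ch, s ⊆ ub := by
    intro ch hchS hchain
    refine ⟨⋃₀ ch, ⟨?_, ?_⟩, fun s hs => Set.subset_sUnion_of_mem hs⟩
    · intro x hx
      obtain ⟨s, hs, hxs⟩ := hx
      exact (hchS hs).1 hxs
    · intro a ha b hb hab
      obtain ⟨s, hs, has⟩ := ha
      obtain ⟨t, ht, hbt⟩ := hb
      by_cases hst : s = t
      · exact (hchS ht).2 (hst ▸ has) hbt hab
      · rcases hchain hs ht hst with h | h
        · exact (hchS ht).2 (h has) hbt hab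
        · exact (hchS hs).2 has (h hbt) hab
  obtain ⟨M, hM⟩ := zorn_subset
    {s : Set E | s ⊆ Metric.closedBall (0 : E) R ∧ s.Pairwise fun a b => r ≤ dist a b} hzorn
  have hMmem := hM.prop
  have hMfin : M.Finite := by
    by_contra hinf
    have hinfM : M.Infinite := hinf
    obtain ⟨F, hFsub, hFcard⟩ :=
      hinfM.exists_subset_card_eq (Nat.floor ((1 + 2 * R / r) ^ n) + 1)
    have h1 := key F (fun x hx => hMmem.1 (hFsub hx)) (hMmem.2.mono hFsub)
    rw [hFcard] at h1
    have h2 : ((1 + 2 * R / r) ^ n : ℝ) < Nat.floor ((1 + 2 * R / r) ^ n) + 1 :=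
      Nat.lt_floor_add_one _
    push_cast at h1
    linarith
  refine ⟨hMfin.toFinset, ?_, ?_, ?_⟩
  · -- nonempty
    rw [Set.Finite.toFinset_nonempty]
    by_contra hemp
    rw [Set.not_nonempty_iff_eq_empty] at hemp
    have h0 : ({0} : Set E) ∈ {s : Set E | s ⊆ Metric.closedBall (0 : E) R ∧
        s.Pairwise fun a b => r ≤ dist a b} := by
      constructor
      · intro x hx
        rw [Set.mem_singleton_iff] at hx
        simp [hx, hR]
      · exact Set.pairwise_singleton _ _
    have := hM.2 h0 (by rw [hemp]; exact Set.empty_subset _)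
    simp [hemp] at this
  · -- card bound
    have := key hMfin.toFinset (by rw [Set.Finite.coe_toFinset]; exact hMmem.1)
      (by rw [Set.Finite.coe_toFinset]; exact hMmem.2)
    exact this
  · -- net property
    intro x hx
    by_cases hxM : x ∈ M
    · exact ⟨x, hMfin.mem_toFinset.mpr hxM, by simp [hr.le]⟩
    · by_contra hno
      push_neg at hno
      have hsep : ∀ y ∈ M, r ≤ dist x y := by
        intro y hy
        have := hno y (hMfin.mem_toFinset.mpr hy)
        rw [dist_eq_norm]
        linarith
      have hins : insert x M ∈ {s : Set E | s ⊆ Metric.closedBall (0 : E) R ∧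
          s.Pairwise fun a b => r ≤ dist a b} := by
        constructor
        · intro z hz
          rcases Set.mem_insert_iff.mp hz with h | h
          · rw [h, Metric.mem_closedBall, dist_zero_right]
            exact hx
          · exact hMmem.1 h
        · refine Set.Pairwise.insert_of_notMem hxM hMmem.2 ?_
          intro y hy
          refine ⟨hsep y hy, ?_⟩
          rw [dist_comm]
          exact hsep y hy
      have := hM.2 hins (Set.subset_insert x M)
      exact hxM (this (Set.mem_insert x M))


lemma abs_quad_le {ι : Type*} [Fintype ι] (M : Matrix ι ι ℝ) (x : ι → ℝ)
    (hx : Real.sqrt (∑ i, x i ^ 2) ≤ 1) :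
    |x ⬝ᵥ (M *ᵥ x)| ≤ Real.sqrt (∑ p : ι × ι, M p.1 p.2 ^ 2) := by
  have h1 : x ⬝ᵥ (M *ᵥ x) = ∑ p : ι × ι, M p.1 p.2 * (x p.1 * x p.2) := by
    rw [Fintype.sum_prod_type]
    simp only [dotProduct, Matrix.mulVec, Finset.mul_sum]
    exact Finset.sum_congr rfl fun i _ => Finset.sum_congr rfl fun j _ => by ring
  rw [h1]
  have h2 := abs_dot_le (fun p : ι × ι => M p.1 p.2) (fun p : ι × ι => x p.1 * x p.2)
  have h3 : ∑ p : ι × ι, (x p.1 * x p.2) ^ 2 = (∑ i, x i ^ 2) ^ 2 := by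
    rw [Fintype.sum_prod_type, sq (∑ i, x i ^ 2), Finset.sum_mul_sum]
    exact Finset.sum_congr rfl fun i _ => Finset.sum_congr rfl fun j _ => by ring
  have hs : ∑ i, x i ^ 2 ≤ 1 := by
    have h4 := Real.sq_sqrt (show (0:ℝ) ≤ ∑ i, x i ^ 2 by positivity)
    nlinarith [Real.sqrt_nonneg (∑ i, x i ^ 2)]
  calc |∑ p : ι × ι, M p.1 p.2 * (x p.1 * x p.2)|
      ≤ Real.sqrt (∑ p : ι × ι, M p.1 p.2 ^ 2) *
        Real.sqrt (∑ p : ι × ι, (x p.1 * x p.2) ^ 2) := h2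
    _ = Real.sqrt (∑ p : ι × ι, M p.1 p.2 ^ 2) * (∑ i, x i ^ 2) := by
        rw [h3, Real.sqrt_sq (by positivity)]
    _ ≤ Real.sqrt (∑ p : ι × ι, M p.1 p.2 ^ 2) * 1 :=
        mul_le_mul_of_nonneg_left hs (Real.sqrt_nonneg _)
    _ = Real.sqrt (∑ p : ι × ι, M p.1 p.2 ^ 2) := mul_one _


theorem stmt13 {S : Type*} {A : Type*} [Fintype A] [Nonempty A]
    (d : ℕ) (hd : 1 ≤ d)
    (φ : S × A → Fin d → ℝ) (hφ : ∀ p, Real.sqrt (∑ i, (φ p i) ^ 2) ≤ 1)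
    (H L B lam ε : ℝ)
    (hH : 0 < H) (hL : 0 ≤ L) (hB : 0 ≤ B) (hlam : 0 < lam) (hε : 0 < ε) :
    ∃ 𝒩 : Finset (S → ℝ),
      Real.log 𝒩.card ≤
          d * Real.log (1 + 4 * L / ε)
            + d ^ 2 * Real.log (1 + 8 * Real.sqrt d * B ^ 2 / (lam * ε ^ 2)) ∧
      ∀ (w : Fin d → ℝ) (β : ℝ) (Λ : Matrix (Fin d) (Fin d) ℝ),
        Real.sqrt (∑ i, (w i) ^ 2) ≤ L → β ∈ Set.Icc 0 B →
        ∀ hPD : Λ.PosDef, (∀ i, lam ≤ hPD.1.eigenvalues i) →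
        ∃ V' ∈ 𝒩, ∀ s : S,
          |min (Finset.univ.sup' Finset.univ_nonempty
              (fun a : A => w ⬝ᵥ φ (s, a)
                + β * Real.sqrt (φ (s, a) ⬝ᵥ (Λ⁻¹ *ᵥ φ (s, a))))) H
            - V' s| ≤ ε := by
  classical
  haveI : Nonempty (Fin d) := ⟨⟨0, hd⟩⟩
  obtain ⟨TW, hTWne, hTWcard, hTWnet⟩ := net_lemma (Fin d) L (ε / 2) hL (by positivity)
  set RA : ℝ := Real.sqrt d * B ^ 2 / lam with hRA
  have hRA0 : 0 ≤ RA := by positivity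
  obtain ⟨TA, hTAne, hTAcard, hTAnet⟩ :=
    net_lemma (Fin d × Fin d) RA (ε ^ 2 / 4) hRA0 (by positivity)
  set mkV : (EuclideanSpace ℝ (Fin d)) × (EuclideanSpace ℝ (Fin d × Fin d)) → (S → ℝ) :=
    fun p => fun s => min (Finset.univ.sup' Finset.univ_nonempty
      (fun a : A => (fun i => p.1 i) ⬝ᵥ φ (s, a) +
        Real.sqrt (φ (s, a) ⬝ᵥ (Matrix.of (fun i j => p.2 (i, j)) *ᵥ φ (s, a))))) H with hmk
  refine ⟨(TW ×ˢ TA).image mkV, ?_, ?_⟩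
  · -- cardinality bound
    have hx1 : (1:ℝ) ≤ 1 + 4 * L / ε := le_add_of_nonneg_right (by positivity)
    have hy1 : (1:ℝ) ≤ 1 + 8 * Real.sqrt d * B ^ 2 / (lam * ε ^ 2) :=
      le_add_of_nonneg_right (by positivity)
    have hWc : (TW.card : ℝ) ≤ (1 + 4 * L / ε) ^ d := by
      have he : 1 + 2 * L / (ε / 2) = 1 + 4 * L / ε := by
        field_simp
        ring
      rw [← he]
      simpa [Fintype.card_fin] using hTWcard
    have hAc : (TA.card : ℝ) ≤ (1 + 8 * Real.sqrt d * B ^ 2 / (lam * ε ^ 2)) ^ (d * d) := by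
      have he : 1 + 2 * RA / (ε ^ 2 / 4) = 1 + 8 * Real.sqrt d * B ^ 2 / (lam * ε ^ 2) := by
        rw [hRA]
        field_simp
        ring
      rw [← he]
      simpa [Fintype.card_prod, Fintype.card_fin] using hTAcard
    have hNle : (((TW ×ˢ TA).image mkV).card : ℝ) ≤
        (1 + 4 * L / ε) ^ d * (1 + 8 * Real.sqrt d * B ^ 2 / (lam * ε ^ 2)) ^ (d * d) := by
      have h1 : ((TW ×ˢ TA).image mkV).card ≤ TW.card * TA.card := by
        refine le_trans Finset.card_image_le ?_
        rw [Finset.card_product]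
      calc (((TW ×ˢ TA).image mkV).card : ℝ) ≤ (TW.card : ℝ) * (TA.card : ℝ) := by
            exact_mod_cast h1
        _ ≤ (1 + 4 * L / ε) ^ d * (1 + 8 * Real.sqrt d * B ^ 2 / (lam * ε ^ 2)) ^ (d * d) :=
            mul_le_mul hWc hAc (Nat.cast_nonneg _) (pow_nonneg (by linarith) _)
    have hNpos : (0:ℝ) < (((TW ×ˢ TA).image mkV).card : ℝ) := by
      have : ((TW ×ˢ TA).image mkV).Nonempty := (hTWne.product hTAne).image _
      exact_mod_cast Finset.card_pos.mpr this
    calc Real.log (((TW ×ˢ TA).image mkV).card : ℝ)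
        ≤ Real.log ((1 + 4 * L / ε) ^ d *
            (1 + 8 * Real.sqrt d * B ^ 2 / (lam * ε ^ 2)) ^ (d * d)) :=
          Real.log_le_log hNpos hNle
      _ = d * Real.log (1 + 4 * L / ε)
            + (d * d : ℕ) * Real.log (1 + 8 * Real.sqrt d * B ^ 2 / (lam * ε ^ 2)) := by
          rw [Real.log_mul (by positivity) (by positivity), Real.log_pow, Real.log_pow]
      _ = d * Real.log (1 + 4 * L / ε)
            + (d:ℝ) ^ 2 * Real.log (1 + 8 * Real.sqrt d * B ^ 2 / (lam * ε ^ 2)) := by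
          push_cast
          ring
  · -- coverage
    intro w β Λ hw hβ hPD hev
    obtain ⟨hβ0, hβB⟩ := hβ
    obtain ⟨w', hw'T, hw'⟩ := hTWnet (WithLp.toLp 2 w) (by rw [EuclideanSpace.norm_eq]; simpa using hw)
    have hwdist : Real.sqrt (∑ i, (w i - w' i) ^ 2) ≤ ε / 2 := by
      have h := hw'
      rw [EuclideanSpace.norm_eq] at h
      simpa using h
    set vA : EuclideanSpace ℝ (Fin d × Fin d) :=
      WithLp.toLp 2 (fun p : Fin d × Fin d => β ^ 2 * Λ⁻¹ p.1 p.2) with hvA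
    have hfrob : ∑ p : Fin d × Fin d, (Λ⁻¹ p.1 p.2) ^ 2 ≤ (d : ℝ) / lam ^ 2 :=
      inv_frob_bound hPD hlam hev
    have hvAnorm : ‖vA‖ ≤ RA := by
      have h1 : ‖vA‖ = β ^ 2 * Real.sqrt (∑ p : Fin d × Fin d, (Λ⁻¹ p.1 p.2) ^ 2) := by
        rw [EuclideanSpace.norm_eq]
        simp only [Real.norm_eq_abs, sq_abs]
        have h2 : ∑ p : Fin d × Fin d, (vA p) ^ 2 =
            (β ^ 2) ^ 2 * ∑ p : Fin d × Fin d, (Λ⁻¹ p.1 p.2) ^ 2 := by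
          rw [Finset.mul_sum]
          exact Finset.sum_congr rfl fun p _ => by rw [hvA]; ring
        rw [h2, Real.sqrt_mul (by positivity), Real.sqrt_sq (sq_nonneg β)]
      rw [h1, hRA]
      have h3 : Real.sqrt ((d:ℝ) / lam ^ 2) = Real.sqrt d / lam := by
        rw [Real.sqrt_div (by positivity : (0:ℝ) ≤ (d:ℝ)), Real.sqrt_sq hlam.le]
      have h4 : Real.sqrt (∑ p : Fin d × Fin d, (Λ⁻¹ p.1 p.2) ^ 2) ≤ Real.sqrt d / lam :=
        le_trans (Real.sqrt_le_sqrt hfrob) (le_of_eq h3)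
      calc β ^ 2 * Real.sqrt (∑ p : Fin d × Fin d, (Λ⁻¹ p.1 p.2) ^ 2)
          ≤ β ^ 2 * (Real.sqrt d / lam) :=
            mul_le_mul_of_nonneg_left h4 (sq_nonneg β)
        _ ≤ B ^ 2 * (Real.sqrt d / lam) :=
            mul_le_mul_of_nonneg_right (pow_le_pow_left₀ hβ0 hβB 2) (by positivity)
        _ = Real.sqrt d * B ^ 2 / lam := by ring
    obtain ⟨y', hy'T, hy'⟩ := hTAnet vA hvAnorm
    refine ⟨mkV (w', y'),
      Finset.mem_image_of_mem mkV (Finset.mem_product.mpr ⟨hw'T, hy'T⟩), ?_⟩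
    intro s
    rw [hmk]
    simp only []
    refine le_trans (abs_min_sub_min_le _ _ _) ?_
    apply abs_sup_sub_sup_le
    intro a
    set x : Fin d → ℝ := φ (s, a) with hxdef
    have hx1 : Real.sqrt (∑ i, x i ^ 2) ≤ 1 := hφ (s, a)
    set A' : Matrix (Fin d) (Fin d) ℝ := Matrix.of (fun i j => y' (i, j)) with hA'
    have ht1 : |w ⬝ᵥ x - (fun i => w' i) ⬝ᵥ x| ≤ ε / 2 := by
      have he : w ⬝ᵥ x - (fun i => w' i) ⬝ᵥ x = ∑ i, (w i - w' i) * x i := by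
        simp only [dotProduct, ← Finset.sum_sub_distrib]
        exact Finset.sum_congr rfl fun i _ => by ring
      rw [he]
      refine le_trans (abs_dot_le _ _) ?_
      calc Real.sqrt (∑ i, (w i - w' i) ^ 2) * Real.sqrt (∑ i, x i ^ 2)
          ≤ (ε / 2) * 1 := mul_le_mul hwdist hx1 (Real.sqrt_nonneg _) (by linarith)
        _ = ε / 2 := mul_one _
    have ht2 : |β * Real.sqrt (x ⬝ᵥ (Λ⁻¹ *ᵥ x)) - Real.sqrt (x ⬝ᵥ (A' *ᵥ x))| ≤ ε / 2 := by
      have hbx : β * Real.sqrt (x ⬝ᵥ (Λ⁻¹ *ᵥ x)) =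
          Real.sqrt (x ⬝ᵥ ((β ^ 2 • Λ⁻¹) *ᵥ x)) := by
        rw [Matrix.smul_mulVec, dotProduct_smul, smul_eq_mul,
          Real.sqrt_mul (sq_nonneg β), Real.sqrt_sq hβ0]
      rw [hbx]
      refine le_trans (abs_sqrt_sub_sqrt_le _ _) ?_
      have hdiff : x ⬝ᵥ ((β ^ 2 • Λ⁻¹) *ᵥ x) - x ⬝ᵥ (A' *ᵥ x) =
          x ⬝ᵥ ((β ^ 2 • Λ⁻¹ - A') *ᵥ x) := by
        rw [Matrix.sub_mulVec, dotProduct_sub]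
      rw [hdiff]
      have hquad := abs_quad_le (β ^ 2 • Λ⁻¹ - A') x hx1
      have hfr : Real.sqrt (∑ p : Fin d × Fin d, ((β ^ 2 • Λ⁻¹ - A') p.1 p.2) ^ 2) ≤
          ε ^ 2 / 4 := by
        have heq : ∀ p : Fin d × Fin d, (β ^ 2 • Λ⁻¹ - A') p.1 p.2 = vA p - y' p := by
          intro p
          simp [hvA, hA', Matrix.sub_apply]
        rw [Finset.sum_congr rfl fun p _ => by rw [heq p]]
        have h := hy'
        rw [EuclideanSpace.norm_eq] at h
        simpa using h
      refine le_trans (Real.sqrt_le_sqrt (le_trans hquad hfr)) ?_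
      rw [show ε ^ 2 / 4 = (ε / 2) ^ 2 by ring, Real.sqrt_sq (by positivity)]
    calc |(w ⬝ᵥ x + β * Real.sqrt (x ⬝ᵥ (Λ⁻¹ *ᵥ x))) -
            ((fun i => w' i) ⬝ᵥ x + Real.sqrt (x ⬝ᵥ (A' *ᵥ x)))|
        = |(w ⬝ᵥ x - (fun i => w' i) ⬝ᵥ x) +
            (β * Real.sqrt (x ⬝ᵥ (Λ⁻¹ *ᵥ x)) - Real.sqrt (x ⬝ᵥ (A' *ᵥ x)))| := by
          ring_nf
      _ ≤ |w ⬝ᵥ x - (fun i => w' i) ⬝ᵥ x| +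
            |β * Real.sqrt (x ⬝ᵥ (Λ⁻¹ *ᵥ x)) - Real.sqrt (x ⬝ᵥ (A' *ᵥ x))| := abs_add_le _ _
      _ ≤ ε / 2 + ε / 2 := add_le_add ht1 ht2
      _ = ε := by ring
end

section
/- Let (Ω, 𝔉, ℙ) be a probability space with filtration (𝔉_k)_{k=0}^n, and let (Y_k)_{k=0}^n be a real-valued martingale with respect to (𝔉_k), with difference sequence X_k = Y_k − Y_{k−1}. Assume |X_k| ≤ R almost surely for k = 1, …, n, and that Σ_{k=1}^n 𝔼[X_k² | 𝔉_{k−1}] ≤ σ² almost surely. Then for all t ≥ 0: ℙ(|Y_n − Y_0| ≥ t) ≤ 2·exp( −(t²/2) / (σ² + R·t/3) ). -/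
open MeasureTheory BigOperators

open MeasureTheory Real Filter

section analytic

lemma fact_ge : ∀ i : ℕ, 2 * 3 ^ i ≤ Nat.factorial (i + 2) := by
  intro i
  induction i with
  | zero => simp [Nat.factorial]
  | succ k ih =>
    have h : Nat.factorial (k + 3) = (k + 3) * Nat.factorial (k + 2) := rfl
    rw [pow_succ]
    calc 2 * (3 ^ k * 3) = 3 * (2 * 3 ^ k) := by ring
    _ ≤ (k + 3) * Nat.factorial (k + 2) := Nat.mul_le_mul (by omega) ih
    _ = Nat.factorial (k + 3) := h.symm

lemma exp_le_nonpos {x : ℝ} (hx : x ≤ 0) : Real.exp x ≤ 1 + x + x ^ 2 / 2 := by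
  have h : AntitoneOn (fun y : ℝ => 1 + y + y ^ 2 / 2 - Real.exp y) (Set.Iic 0) := by
    apply antitoneOn_of_deriv_nonpos (convex_Iic 0)
    · fun_prop
    · intro y hy
      exact (by fun_prop : Differentiable ℝ (fun y : ℝ => 1 + y + y ^ 2 / 2 - Real.exp y)).differentiableAt.differentiableWithinAt
    · intro y hy
      have hd : deriv (fun y : ℝ => 1 + y + y ^ 2 / 2 - Real.exp y) y
          = 1 + y - Real.exp y := by
        have : HasDerivAt (fun y : ℝ => 1 + y + y ^ 2 / 2 - Real.exp y)
            (0 + 1 + y - Real.exp y) y := by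
          have h1 : HasDerivAt (fun y : ℝ => y ^ 2 / 2) y y := by
            simpa using ((hasDerivAt_pow 2 y).div_const 2)
          exact (((hasDerivAt_const y (1:ℝ)).add (hasDerivAt_id y)).add h1).sub
            (Real.hasDerivAt_exp y) |>.congr_deriv (by ring)
        simpa using this.deriv
      rw [hd]
      have := Real.add_one_le_exp y
      linarith
  have h0 : (fun y : ℝ => 1 + y + y ^ 2 / 2 - Real.exp y) 0 = 0 := by simp
  have := h (Set.mem_Iic.mpr hx) (Set.mem_Iic.mpr le_rfl) hx
  simp only [h0] at this
  linarith [this]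

lemma exp_le_nonneg {x : ℝ} (h0 : 0 ≤ x) (h3 : x < 3) :
    Real.exp x ≤ 1 + x + x ^ 2 / 2 / (1 - x / 3) := by
  have hexp : Real.exp x = ∑' n : ℕ, x ^ n / n.factorial := by
    rw [Real.exp_eq_exp_ℝ, NormedSpace.exp_eq_tsum_div]
  have hsum : Summable (fun n : ℕ => x ^ n / n.factorial) :=
    Real.summable_pow_div_factorial x
  have hsplit := Summable.sum_add_tsum_nat_add 2 hsum
  have hr : (0:ℝ) ≤ x / 3 := by positivity
  have hr1 : x / 3 < 1 := by linarith
  have hgeo : Summable (fun i : ℕ => x ^ 2 / 2 * (x / 3) ^ i) :=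
    (summable_geometric_of_lt_one hr hr1).mul_left _
  have hterm : ∀ i : ℕ, x ^ (i + 2) / (Nat.factorial (i + 2)) ≤ x ^ 2 / 2 * (x / 3) ^ i := by
    intro i
    have hf := fact_ge i
    have hf' : (2 * 3 ^ i : ℝ) ≤ (Nat.factorial (i + 2) : ℝ) := by exact_mod_cast hf
    have hpos : (0:ℝ) < 2 * 3 ^ i := by positivity
    have : x ^ (i + 2) / (Nat.factorial (i + 2) : ℝ) ≤ x ^ (i + 2) / (2 * 3 ^ i) :=
      div_le_div_of_nonneg_left (by positivity) hpos hf' |>.trans_eq rfl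
    refine this.trans (le_of_eq ?_)
    rw [div_pow, pow_add]
    ring
  have htail : (∑' i : ℕ, x ^ (i + 2) / (Nat.factorial (i + 2))) ≤
      ∑' i : ℕ, x ^ 2 / 2 * (x / 3) ^ i :=
    Summable.tsum_le_tsum hterm ((summable_nat_add_iff 2).mpr hsum) hgeo
  have hgval : (∑' i : ℕ, x ^ 2 / 2 * (x / 3) ^ i) = x ^ 2 / 2 * (1 - x / 3)⁻¹ := by
    rw [tsum_mul_left, tsum_geometric_of_lt_one hr hr1]
  have hhead : (∑ i ∈ Finset.range 2, x ^ i / (Nat.factorial i)) = 1 + x := by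
    simp [Finset.sum_range_succ, Nat.factorial]
  rw [hexp, ← hsplit, hhead]
  rw [hgval] at htail
  have : x ^ 2 / 2 * (1 - x/3)⁻¹ = x ^ 2 / 2 / (1 - x/3) := by ring
  linarith [htail.trans_eq this]

lemma exp_key {x b : ℝ} (hxb : x ≤ b) (hb0 : 0 ≤ b) (hb3 : b < 3) :
    Real.exp x ≤ 1 + x + x ^ 2 / 2 / (1 - b / 3) := by
  have hb : (0:ℝ) < 1 - b / 3 := by linarith
  rcases le_or_gt x 0 with hx | hx
  · have h1 := exp_le_nonpos hx
    have h2 : x ^ 2 / 2 ≤ x ^ 2 / 2 / (1 - b / 3) := by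
      rw [le_div_iff₀ hb]
      nlinarith [sq_nonneg x]
    linarith
  · have h1 := exp_le_nonneg hx.le (lt_of_le_of_lt hxb hb3)
    have h2 : x ^ 2 / 2 / (1 - x / 3) ≤ x ^ 2 / 2 / (1 - b / 3) := by
      apply div_le_div_of_nonneg_left (by positivity) hb
      linarith
    linarith

end analytic

section main

variable {Ω : Type*} {m : MeasurableSpace Ω}

lemma integrable_of_ae_bound (μ : Measure Ω) [IsFiniteMeasure μ] {f : Ω → ℝ}
    (hm : AEStronglyMeasurable f μ) {C : ℝ} (h : ∀ᵐ ω ∂μ, |f ω| ≤ C) :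
    Integrable f μ :=
  ⟨hm, HasFiniteIntegral.of_bounded (C := C)
    (h.mono fun ω hω => by simpa [Real.norm_eq_abs] using hω)⟩

lemma freedman_one_sided (μ : Measure Ω) [IsProbabilityMeasure μ]
    (ℱ : Filtration ℕ m) (n : ℕ)
    (Y : ℕ → Ω → ℝ) (hY : Martingale Y ℱ μ)
    (X : ℕ → Ω → ℝ) (hX : ∀ k, X k = Y k - Y (k - 1))
    (R : ℝ) (hR0 : 0 ≤ R) (hR : ∀ k ∈ Finset.Icc 1 n, ∀ᵐ ω ∂μ, |X k ω| ≤ R)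
    (σ : ℝ) (hσ : 0 < σ ^ 2)
    (hvar : ∀ᵐ ω ∂μ,
      ∑ k ∈ Finset.Icc 1 n, (μ[fun ω' => (X k ω') ^ 2 | ℱ (k - 1)]) ω ≤ σ ^ 2)
    (t : ℝ) (ht : 0 < t) :
    μ {ω | t ≤ Y n ω - Y 0 ω} ≤
      ENNReal.ofReal (Real.exp (-(t ^ 2 / 2) / (σ ^ 2 + R * t / 3))) := by
  set D : ℝ := σ ^ 2 + R * t / 3 with hD_def
  have hD : 0 < D := by positivity
  set l : ℝ := t / D with hl_def
  have hl : 0 < l := by positivity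
  have h13 : 1 - l * R / 3 = σ ^ 2 / D := by
    field_simp [hl_def, hD_def]
    rw [sub_mul, show l * R * D = t * R by rw [hl_def, mul_right_comm, div_mul_cancel₀ t hD.ne'], hD_def]
    ring
  have h13pos : 0 < 1 - l * R / 3 := by rw [h13]; positivity
  have hlR3 : l * R < 3 := by nlinarith
  set c : ℝ := l ^ 2 / 2 / (1 - l * R / 3) with hc_def
  have hc0 : 0 ≤ c := by positivity
  -- notation
  set V : ℕ → Ω → ℝ := fun k => μ[fun ω' => (X k ω') ^ 2 | ℱ (k - 1)] with hV_def
  set S : ℕ → Ω → ℝ := fun j ω => ∑ k ∈ Finset.Icc 1 j, V k ω with hS_def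
  set F : ℕ → Ω → ℝ := fun j ω => Real.exp (l * (Y j ω - Y 0 ω) - c * S j ω) with hF_def
  -- measurability
  have hXm : ∀ k, StronglyMeasurable[ℱ k] (X k) := by
    intro k
    rw [hX k]
    exact (hY.stronglyAdapted k).sub ((hY.stronglyAdapted (k - 1)).mono (ℱ.mono (Nat.sub_le k 1)))
  have hXm' : ∀ k, AEStronglyMeasurable (X k) μ :=
    fun k => ((hXm k).mono (ℱ.le k)).aestronglyMeasurable
  have hXint : ∀ k ∈ Finset.Icc 1 n, Integrable (X k) μ :=
    fun k hk => integrable_of_ae_bound μ (hXm' k) (hR k hk)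
  have hX2int : ∀ k ∈ Finset.Icc 1 n, Integrable (fun ω => (X k ω) ^ 2) μ := by
    intro k hk
    refine integrable_of_ae_bound μ (C := R ^ 2)
      (((hXm k).mono (ℱ.le k)).pow 2).aestronglyMeasurable ?_
    filter_upwards [hR k hk] with ω hω
    rw [abs_pow, sq_abs]
    calc (X k ω) ^ 2 = |X k ω| ^ 2 := (sq_abs _).symm
    _ ≤ R ^ 2 := pow_le_pow_left₀ (abs_nonneg _) hω 2
  have hVm : ∀ k, StronglyMeasurable[ℱ (k - 1)] (V k) := fun k => stronglyMeasurable_condExp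
  have hSm : ∀ j, StronglyMeasurable[ℱ j] (S j) := by
    intro j
    apply Finset.stronglyMeasurable_fun_sum
    intro k hk
    exact (hVm k).mono (ℱ.mono (by simp at hk; omega))
  have hYm : ∀ j, StronglyMeasurable[ℱ j] (fun ω => Y j ω - Y 0 ω) :=
    fun j => (hY.stronglyAdapted j).sub ((hY.stronglyAdapted 0).mono (ℱ.mono (Nat.zero_le j)))
  have hFm : ∀ j, StronglyMeasurable[ℱ j] (F j) := by
    intro j
    exact Real.continuous_exp.comp_stronglyMeasurable
      (((hYm j).const_mul l).sub ((hSm j).const_mul c))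
  -- a.e. bounds on V
  have hV0 : ∀ k, (0 : Ω → ℝ) ≤ᵐ[μ] V k := by
    intro k
    exact condExp_nonneg (Eventually.of_forall fun ω => sq_nonneg _)
  have hVub : ∀ k ∈ Finset.Icc 1 n, V k ≤ᵐ[μ] fun _ => R ^ 2 := by
    intro k hk
    have h1 : (fun ω => (X k ω) ^ 2) ≤ᵐ[μ] fun _ => R ^ 2 := by
      filter_upwards [hR k hk] with ω hω
      calc (X k ω) ^ 2 = |X k ω| ^ 2 := (sq_abs _).symm
      _ ≤ R ^ 2 := pow_le_pow_left₀ (abs_nonneg _) hω 2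
    have := condExp_mono (m := ℱ (k - 1)) (hX2int k hk) (integrable_const _) h1
    refine this.trans ?_
    rw [condExp_const (ℱ.le (k - 1))]
  -- telescoping
  have htel : ∀ j ω, Y j ω - Y 0 ω = ∑ k ∈ Finset.Icc 1 j, X k ω := by
    intro j ω
    induction j with
    | zero => simp
    | succ i ih =>
      rw [← Finset.insert_Icc_right_eq_Icc_add_one (by omega : 1 ≤ i + 1), Finset.sum_insert (by simp)]
      have hx : X (i+1) ω = Y (i+1) ω - Y i ω := by
        rw [hX (i+1)]; simp
      rw [hx, ← ih]
      ring
  -- master a.e. good event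
  have hgood : ∀ᵐ ω ∂μ, ∀ k ∈ Finset.Icc 1 n, |X k ω| ≤ R ∧ 0 ≤ V k ω ∧ V k ω ≤ R ^ 2 := by
    rw [eventually_all_finset]
    intro k hk
    filter_upwards [hR k hk, hV0 k, hVub k hk] with ω h1 h2 h3
    exact ⟨h1, h2, h3⟩
  -- a.e. bounds on S and Y j - Y 0, for j ≤ n
  have hSb : ∀ᵐ ω ∂μ, ∀ j ≤ n, 0 ≤ S j ω ∧ |Y j ω - Y 0 ω| ≤ n * R := by
    filter_upwards [hgood] with ω hω
    intro j hj
    have hsub : Finset.Icc 1 j ⊆ Finset.Icc 1 n :=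
      Finset.Icc_subset_Icc le_rfl hj
    constructor
    · apply Finset.sum_nonneg
      intro k hk
      exact (hω k (hsub hk)).2.1
    · rw [htel j ω]
      calc |∑ k ∈ Finset.Icc 1 j, X k ω| ≤ ∑ k ∈ Finset.Icc 1 j, |X k ω| :=
            Finset.abs_sum_le_sum_abs _ _
      _ ≤ ∑ k ∈ Finset.Icc 1 j, R := Finset.sum_le_sum fun k hk => (hω k (hsub hk)).1
      _ = j * R := by simp [Nat.card_Icc]
      _ ≤ n * R := by
          apply mul_le_mul_of_nonneg_right _ hR0
          exact_mod_cast hj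
  -- F j is a.e. bounded and integrable for j ≤ n
  have hFb : ∀ j ≤ n, ∀ᵐ ω ∂μ, |F j ω| ≤ Real.exp (l * (n * R)) := by
    intro j hj
    filter_upwards [hSb] with ω hω
    obtain ⟨hS0, hYb⟩ := hω j hj
    rw [abs_of_pos (Real.exp_pos _), Real.exp_le_exp]
    have h1 : l * (Y j ω - Y 0 ω) ≤ l * (n * R) :=
      mul_le_mul_of_nonneg_left ((le_abs_self _).trans hYb) hl.le
    nlinarith
  have hFint : ∀ j ≤ n, Integrable (F j) μ := fun j hj =>
    integrable_of_ae_bound μ ((hFm j).mono (ℱ.le j)).aestronglyMeasurable (hFb j hj)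
  -- the core induction
  have hmain : ∀ j ≤ n, ∫ ω, F j ω ∂μ ≤ 1 := by
    intro j
    induction j with
    | zero =>
      intro _
      have : F 0 = fun _ => 1 := by
        funext ω
        simp [hF_def, hS_def]
      rw [this]
      simp
    | succ i ih =>
      intro hin
      have hi_le : i ≤ n := Nat.le_of_succ_le hin
      have hk_mem : i + 1 ∈ Finset.Icc 1 n := by simp; omega
      have hi1 : (i + 1 : ℕ) - 1 = i := by omega
      -- conditional bound
      have hexpint : Integrable (fun ω => Real.exp (l * X (i+1) ω)) μ := by
        refine integrable_of_ae_bound μ (C := Real.exp (l * R))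
          (Real.continuous_exp.comp_stronglyMeasurable
            (((hXm (i+1)).mono (ℱ.le _)).const_mul l)).aestronglyMeasurable ?_
        filter_upwards [hR _ hk_mem] with ω hω
        rw [abs_of_pos (Real.exp_pos _), Real.exp_le_exp]
        exact mul_le_mul_of_nonneg_left ((le_abs_self _).trans hω) hl.le
      have hrhsint : Integrable (fun ω => 1 + l * X (i+1) ω + c * (X (i+1) ω) ^ 2) μ := by
        apply Integrable.add
        apply Integrable.add (integrable_const 1)
        exact (hXint _ hk_mem).const_mul l
        exact (hX2int _ hk_mem).const_mul c
      have hptwise : (fun ω => Real.exp (l * X (i+1) ω)) ≤ᵐ[μ]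
          fun ω => 1 + l * X (i+1) ω + c * (X (i+1) ω) ^ 2 := by
        filter_upwards [hR _ hk_mem] with ω hω
        have hxb : l * X (i+1) ω ≤ l * R :=
          mul_le_mul_of_nonneg_left ((le_abs_self _).trans hω) hl.le
        have := exp_key hxb (by positivity) hlR3
        have hc_eq : (l * X (i+1) ω) ^ 2 / 2 / (1 - l * R / 3) = c * (X (i+1) ω) ^ 2 := by
          rw [hc_def]; ring
        linarith [this.trans_eq (by rw [hc_eq])]
      have hcondX : μ[X (i+1) | ℱ i] =ᵐ[μ] 0 := by
        have h1 : X (i+1) = Y (i+1) - Y i := by rw [hX (i+1), hi1]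
        rw [h1]
        have h2 := condExp_sub (m := ℱ i) (hY.integrable (i+1)) (hY.integrable i)
        refine h2.trans ?_
        have h3 := hY.condExp_ae_eq (Nat.le_succ i)
        have h4 : μ[Y i | ℱ i] = Y i :=
          condExp_of_stronglyMeasurable (ℱ.le i) (hY.stronglyAdapted i) (hY.integrable i)
        rw [h4]
        filter_upwards [h3] with ω hω
        simp [hω]
      have hcond : μ[fun ω => Real.exp (l * X (i+1) ω) | ℱ i] ≤ᵐ[μ]
          fun ω => Real.exp (c * V (i+1) ω) := by
        have step1 := condExp_mono (m := ℱ i) hexpint hrhsint hptwise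
        have step2 : μ[fun ω => 1 + l * X (i+1) ω + c * (X (i+1) ω) ^ 2 | ℱ i] =ᵐ[μ]
            fun ω => 1 + c * V (i+1) ω := by
          have e1 : (fun ω => 1 + l * X (i+1) ω + c * (X (i+1) ω) ^ 2)
              = (fun _ => (1:ℝ)) + (l • X (i+1) + c • fun ω => (X (i+1) ω) ^ 2) := by
            funext ω; simp [Pi.add_apply]; ring
          rw [e1]
          have haddint : Integrable (l • X (i+1) + c • fun ω => (X (i+1) ω)^2) μ :=
            ((hXint _ hk_mem).smul l).add ((hX2int _ hk_mem).smul c)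
          refine (condExp_add (integrable_const 1) haddint (ℱ i)).trans ?_
          have hadd2 : μ[l • X (i+1) + c • (fun ω => (X (i+1) ω)^2)|ℱ i] =ᵐ[μ]
              l • μ[X (i+1)|ℱ i] + c • μ[fun ω => (X (i+1) ω)^2|ℱ i] := (condExp_add ((hXint _ hk_mem).smul l) ((hX2int _ hk_mem).smul c) (ℱ i)).trans
              ((condExp_smul (𝕜 := ℝ) l (X (i+1)) (ℱ i)).add
                (condExp_smul (𝕜 := ℝ) c (fun ω => (X (i+1) ω)^2) (ℱ i)))
          rw [condExp_const (ℱ.le i)]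
          filter_upwards [hadd2, hcondX] with ω h1 h2
          simp only [Pi.add_apply, Pi.smul_apply, smul_eq_mul, Pi.zero_apply] at h1 h2 ⊢
          rw [h1, h2]
          simp [hV_def]
        refine (step1.trans step2.le).trans ?_
        filter_upwards with ω
        have := Real.add_one_le_exp (c * V (i+1) ω)
        linarith
      -- decompose F (i+1)
      set G : Ω → ℝ := fun ω => Real.exp (l * (Y i ω - Y 0 ω) - c * S (i+1) ω) with hG_def
      have hGm : StronglyMeasurable[ℱ i] G := by
        apply Real.continuous_exp.comp_stronglyMeasurable
        refine ((hYm i).const_mul l).sub (StronglyMeasurable.const_mul ?_ c)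
        apply Finset.stronglyMeasurable_fun_sum
        intro k hk
        exact (hVm k).mono (ℱ.mono (by simp at hk; omega))
      have hSsucc : ∀ ω, S (i+1) ω = S i ω + V (i+1) ω := by
        intro ω
        rw [hS_def]
        simp only
        rw [← Finset.insert_Icc_right_eq_Icc_add_one (by omega : 1 ≤ i + 1),
          Finset.sum_insert (by simp)]
        ring
      have hFdecomp : ∀ ω, F (i+1) ω = G ω * Real.exp (l * X (i+1) ω) := by
        intro ω
        rw [hF_def, hG_def]
        simp only
        rw [← Real.exp_add]
        congr 1
        have : Y (i+1) ω - Y 0 ω = (Y i ω - Y 0 ω) + X (i+1) ω := by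
          rw [hX (i+1), hi1]; simp
        rw [this]; ring
      have hGb : ∀ᵐ ω ∂μ, |G ω| ≤ Real.exp (l * (n * R)) := by
        filter_upwards [hSb] with ω hω
        obtain ⟨hSi0, hYbi⟩ := hω i hi_le
        obtain ⟨hSi10, _⟩ := hω (i+1) hin
        rw [abs_of_pos (Real.exp_pos _), Real.exp_le_exp]
        have h1 : l * (Y i ω - Y 0 ω) ≤ l * (n * R) :=
          mul_le_mul_of_nonneg_left ((le_abs_self _).trans hYbi) hl.le
        nlinarith
      have hGF : ∀ ω, G ω * Real.exp (c * V (i+1) ω) = F i ω := by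
        intro ω
        rw [hG_def, hF_def]
        simp only
        rw [← Real.exp_add, hSsucc ω]
        congr 1
        ring
      have hFsuccint : Integrable (F (i+1)) μ := hFint (i+1) hin
      have hint1 : Integrable (fun ω => G ω * Real.exp (l * X (i+1) ω)) μ := by
        apply hFsuccint.congr
        filter_upwards with ω
        exact hFdecomp ω
      calc ∫ ω, F (i+1) ω ∂μ = ∫ ω, G ω * Real.exp (l * X (i+1) ω) ∂μ := by
            apply integral_congr_ae
            filter_upwards with ω
            exact hFdecomp ω
      _ = ∫ ω, (μ[fun ω' => G ω' * Real.exp (l * X (i+1) ω') | ℱ i]) ω ∂μ :=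
            (integral_condExp (ℱ.le i)).symm
      _ = ∫ ω, G ω * (μ[fun ω' => Real.exp (l * X (i+1) ω') | ℱ i]) ω ∂μ := by
            apply integral_congr_ae
            exact condExp_mul_of_stronglyMeasurable_left hGm hint1 hexpint
      _ ≤ ∫ ω, G ω * Real.exp (c * V (i+1) ω) ∂μ := by
            apply integral_mono_ae
            · exact Integrable.bdd_mul integrable_condExp
                ((hGm.mono (ℱ.le i)).aestronglyMeasurable)
                (hGb.mono fun ω hω => by simpa [Real.norm_eq_abs] using hω)
            · apply (hFint i hi_le).congr
              filter_upwards with ω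
              exact (hGF ω).symm
            · filter_upwards [hcond] with ω hω
              exact mul_le_mul_of_nonneg_left hω (Real.exp_pos _).le
      _ = ∫ ω, F i ω ∂μ := by
            apply integral_congr_ae
            filter_upwards with ω
            exact hGF ω
      _ ≤ 1 := ih hi_le
  -- mgf bound
  have hZint : Integrable (fun ω => Real.exp (l * (Y n ω - Y 0 ω))) μ := by
    refine integrable_of_ae_bound μ (C := Real.exp (l * (n * R)))
      (Real.continuous_exp.comp_stronglyMeasurable
        (((hYm n).mono (ℱ.le n)).const_mul l)).aestronglyMeasurable ?_
    filter_upwards [hSb] with ω hω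
    obtain ⟨_, hYb⟩ := hω n le_rfl
    rw [abs_of_pos (Real.exp_pos _), Real.exp_le_exp]
    exact mul_le_mul_of_nonneg_left ((le_abs_self _).trans hYb) hl.le
  have hmgf : ∫ ω, Real.exp (l * (Y n ω - Y 0 ω)) ∂μ ≤ Real.exp (c * σ ^ 2) := by
    have hae : (fun ω => Real.exp (l * (Y n ω - Y 0 ω))) ≤ᵐ[μ]
        fun ω => F n ω * Real.exp (c * σ ^ 2) := by
      filter_upwards [hvar] with ω hω
      rw [hF_def]
      simp only
      rw [← Real.exp_add]
      rw [Real.exp_le_exp]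
      have : S n ω ≤ σ ^ 2 := hω
      nlinarith
    calc ∫ ω, Real.exp (l * (Y n ω - Y 0 ω)) ∂μ
        ≤ ∫ ω, F n ω * Real.exp (c * σ ^ 2) ∂μ :=
          integral_mono_ae hZint ((hFint n le_rfl).mul_const _) hae
    _ = (∫ ω, F n ω ∂μ) * Real.exp (c * σ ^ 2) := integral_mul_const _ _
    _ ≤ 1 * Real.exp (c * σ ^ 2) := by
          apply mul_le_mul_of_nonneg_right (hmain n le_rfl) (Real.exp_pos _).le
    _ = Real.exp (c * σ ^ 2) := one_mul _
  -- Chernoff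
  have hcher := ProbabilityTheory.measure_ge_le_exp_mul_mgf (X := fun ω => Y n ω - Y 0 ω)
    (μ := μ) (t := l) t hl.le hZint
  have hmgf_def : ProbabilityTheory.mgf (fun ω => Y n ω - Y 0 ω) μ l
      = ∫ ω, Real.exp (l * (Y n ω - Y 0 ω)) ∂μ := rfl
  have hfinal : Real.exp (-l * t) * ProbabilityTheory.mgf (fun ω => Y n ω - Y 0 ω) μ l
      ≤ Real.exp (-(t ^ 2 / 2) / D) := by
    rw [hmgf_def]
    calc Real.exp (-l * t) * ∫ ω, Real.exp (l * (Y n ω - Y 0 ω)) ∂μ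
        ≤ Real.exp (-l * t) * Real.exp (c * σ ^ 2) :=
          mul_le_mul_of_nonneg_left hmgf (Real.exp_pos _).le
    _ = Real.exp (-l * t + c * σ ^ 2) := (Real.exp_add _ _).symm
    _ = Real.exp (-(t ^ 2 / 2) / D) := by
          congr 1
          rw [hc_def, h13, hl_def]
          field_simp [show σ ≠ 0 by rintro rfl; simp at hσ]
          ring
  rw [ENNReal.le_ofReal_iff_toReal_le (measure_ne_top μ _) (Real.exp_pos _).le]
  exact hcher.trans hfinal

end main


theorem stmt14 {Ω : Type*} {m : MeasurableSpace Ω} (μ : Measure Ω) [IsProbabilityMeasure μ]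
    (ℱ : Filtration ℕ m) (n : ℕ)
    (Y : ℕ → Ω → ℝ) (hY : Martingale Y ℱ μ)
    (X : ℕ → Ω → ℝ) (hX : ∀ k, X k = Y k - Y (k - 1))
    (R : ℝ) (hR : ∀ k ∈ Finset.Icc 1 n, ∀ᵐ ω ∂μ, |X k ω| ≤ R)
    (σ : ℝ)
    (hvar : ∀ᵐ ω ∂μ,
      ∑ k ∈ Finset.Icc 1 n, (μ[fun ω' => (X k ω') ^ 2 | ℱ (k - 1)]) ω ≤ σ ^ 2) :
    ∀ t : ℝ, 0 ≤ t →
      μ {ω | t ≤ |Y n ω - Y 0 ω|} ≤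
        ENNReal.ofReal (2 * Real.exp (-(t ^ 2 / 2) / (σ ^ 2 + R * t / 3))) := by
  intro t ht
  rcases eq_or_lt_of_le ht with h0 | htpos
  · -- t = 0
    subst h0
    have h1 : -((0:ℝ) ^ 2 / 2) / (σ ^ 2 + R * 0 / 3) = 0 := by norm_num
    rw [h1, Real.exp_zero, mul_one]
    calc μ {ω | (0:ℝ) ≤ |Y n ω - Y 0 ω|} ≤ 1 := prob_le_one
    _ ≤ ENNReal.ofReal 2 := by
        exact ENNReal.one_le_ofReal.mpr one_le_two
  · -- t > 0
    rcases Nat.eq_zero_or_pos n with hn | hn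
    · subst hn
      have hempty : {ω | t ≤ |Y 0 ω - Y 0 ω|} = ∅ := by
        ext ω
        simp [htpos.not_ge]
      rw [hempty, measure_empty]
      exact zero_le
    have hn1 : 1 ≤ n := hn
    haveI : (ae μ).NeBot := ae_neBot.2 (IsProbabilityMeasure.ne_zero μ)
    have hR0 : 0 ≤ R := by
      obtain ⟨ω, hω⟩ := (hR 1 (by simp [hn1])).exists
      exact (abs_nonneg _).trans hω
    -- measurability and integrability basics
    have hXm : ∀ k, StronglyMeasurable[ℱ k] (X k) := by
      intro k
      rw [hX k]
      exact (hY.stronglyAdapted k).sub ((hY.stronglyAdapted (k - 1)).mono (ℱ.mono (Nat.sub_le k 1)))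
    have hX2int : ∀ k ∈ Finset.Icc 1 n, Integrable (fun ω => (X k ω) ^ 2) μ := by
      intro k hk
      refine integrable_of_ae_bound μ (C := R ^ 2)
        (((hXm k).mono (ℱ.le k)).pow 2).aestronglyMeasurable ?_
      filter_upwards [hR k hk] with ω hω
      rw [abs_pow, sq_abs]
      calc (X k ω) ^ 2 = |X k ω| ^ 2 := (sq_abs _).symm
      _ ≤ R ^ 2 := pow_le_pow_left₀ (abs_nonneg _) hω 2
    have htel : ∀ j ω, Y j ω - Y 0 ω = ∑ k ∈ Finset.Icc 1 j, X k ω := by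
      intro j ω
      induction j with
      | zero => simp
      | succ i ih =>
        rw [← Finset.insert_Icc_right_eq_Icc_add_one (by omega : 1 ≤ i + 1), Finset.sum_insert (by simp)]
        have hx : X (i+1) ω = Y (i+1) ω - Y i ω := by
          rw [hX (i+1)]; simp
        rw [hx, ← ih]
        ring
    rcases (sq_nonneg σ).eq_or_lt with hσ0 | hσpos
    · -- degenerate variance: X k = 0 a.e.
      have hV0 : ∀ k, (0 : Ω → ℝ) ≤ᵐ[μ] μ[fun ω' => (X k ω') ^ 2 | ℱ (k - 1)] :=
        fun k => condExp_nonneg (Filter.Eventually.of_forall fun ω => sq_nonneg _)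
      have hSint : Integrable
          (fun ω => ∑ k ∈ Finset.Icc 1 n, (μ[fun ω' => (X k ω') ^ 2 | ℱ (k - 1)]) ω) μ :=
        integrable_finset_sum _ fun k _ => integrable_condExp
      have hsum0 : ∑ k ∈ Finset.Icc 1 n,
          ∫ ω, (μ[fun ω' => (X k ω') ^ 2 | ℱ (k - 1)]) ω ∂μ ≤ 0 := by
        rw [← integral_finset_sum _ fun k _ => integrable_condExp]
        calc ∫ ω, ∑ k ∈ Finset.Icc 1 n, (μ[fun ω' => (X k ω') ^ 2 | ℱ (k - 1)]) ω ∂μ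
            ≤ ∫ _ω, σ ^ 2 ∂μ := integral_mono_ae hSint (integrable_const _) hvar
        _ = σ ^ 2 := by simp
        _ = 0 := hσ0.symm
      have hXzero : ∀ k ∈ Finset.Icc 1 n, X k =ᵐ[μ] 0 := by
        intro k hk
        have hik : ∫ ω, (μ[fun ω' => (X k ω') ^ 2 | ℱ (k - 1)]) ω ∂μ
            = ∫ ω, (X k ω) ^ 2 ∂μ := integral_condExp (ℱ.le _)
        have hnonneg : ∀ j ∈ Finset.Icc 1 n,
            0 ≤ ∫ ω, (μ[fun ω' => (X j ω') ^ 2 | ℱ (j - 1)]) ω ∂μ := by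
          intro j _
          exact integral_nonneg_of_ae (hV0 j)
        have hzero : ∫ ω, (μ[fun ω' => (X k ω') ^ 2 | ℱ (k - 1)]) ω ∂μ = 0 := by
          have h1 := Finset.sum_nonneg hnonneg
          have h2 := Finset.single_le_sum hnonneg hk
          have h3 := hnonneg k hk
          linarith
        rw [hik] at hzero
        have := (integral_eq_zero_iff_of_nonneg_ae
          (Filter.Eventually.of_forall fun ω => sq_nonneg (X k ω)) (hX2int k hk)).mp hzero
        filter_upwards [this] with ω hω
        have : (X k ω) ^ 2 = 0 := hω
        exact pow_eq_zero_iff (by norm_num) |>.mp this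
      have hZ0 : ∀ᵐ ω ∂μ, Y n ω - Y 0 ω = 0 := by
        have hall : ∀ᵐ ω ∂μ, ∀ k ∈ Finset.Icc 1 n, X k ω = 0 := by
          rw [Filter.eventually_all_finset]
          intro k hk
          filter_upwards [hXzero k hk] with ω hω using hω
        filter_upwards [hall] with ω hω
        rw [htel n ω]
        exact Finset.sum_eq_zero hω
      have hμ0 : μ {ω | t ≤ |Y n ω - Y 0 ω|} = 0 := by
        have hne : ∀ᵐ ω ∂μ, ¬ (t ≤ |Y n ω - Y 0 ω|) := by
          filter_upwards [hZ0] with ω hω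
          rw [hω]
          simpa using htpos.not_ge
        have := MeasureTheory.ae_iff.mp hne
        simpa [not_not] using this
      rw [hμ0]
      exact zero_le
    · -- main case
      have A := freedman_one_sided μ ℱ n Y hY X hX R hR0 hR σ hσpos hvar t htpos
      set Y' : ℕ → Ω → ℝ := fun k ω => -Y k ω with hY'_def
      set X' : ℕ → Ω → ℝ := fun k ω => -X k ω with hX'_def
      have hY' : Martingale Y' ℱ μ := by
        have := hY.neg
        convert this using 2
        rfl
      have hX' : ∀ k, X' k = Y' k - Y' (k - 1) := by
        intro k
        funext ω
        have : X k ω = Y k ω - Y (k-1) ω := by rw [hX k]; simp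
        simp [hX'_def, hY'_def, this]
        ring
      have hR' : ∀ k ∈ Finset.Icc 1 n, ∀ᵐ ω ∂μ, |X' k ω| ≤ R := by
        intro k hk
        filter_upwards [hR k hk] with ω hω
        simpa [hX'_def, abs_neg] using hω
      have hvar' : ∀ᵐ ω ∂μ,
          ∑ k ∈ Finset.Icc 1 n, (μ[fun ω' => (X' k ω') ^ 2 | ℱ (k - 1)]) ω ≤ σ ^ 2 := by
        have heq : ∀ k, (fun ω' => (X' k ω') ^ 2) = fun ω' => (X k ω') ^ 2 := by
          intro k; funext ω'; simp [hX'_def]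
        simpa only [heq] using hvar
      have B := freedman_one_sided μ ℱ n Y' hY' X' hX' R hR0 hR' σ hσpos hvar' t htpos
      have hBset : {ω | t ≤ Y' n ω - Y' 0 ω} = {ω | t ≤ -(Y n ω - Y 0 ω)} := by
        ext ω; simp [hY'_def]; constructor <;> intro h <;> linarith
      rw [hBset] at B
      have hsub : {ω | t ≤ |Y n ω - Y 0 ω|} ⊆
          {ω | t ≤ Y n ω - Y 0 ω} ∪ {ω | t ≤ -(Y n ω - Y 0 ω)} := by
        intro ω hω
        have hω' : t ≤ |Y n ω - Y 0 ω| := hω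
        rcases le_abs.mp hω' with h | h
        · exact Or.inl h
        · exact Or.inr h
      calc μ {ω | t ≤ |Y n ω - Y 0 ω|}
          ≤ μ ({ω | t ≤ Y n ω - Y 0 ω} ∪ {ω | t ≤ -(Y n ω - Y 0 ω)}) := measure_mono hsub
      _ ≤ μ {ω | t ≤ Y n ω - Y 0 ω} + μ {ω | t ≤ -(Y n ω - Y 0 ω)} := measure_union_le _ _
      _ ≤ ENNReal.ofReal (Real.exp (-(t ^ 2 / 2) / (σ ^ 2 + R * t / 3)))
          + ENNReal.ofReal (Real.exp (-(t ^ 2 / 2) / (σ ^ 2 + R * t / 3))) := add_le_add A B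
      _ = ENNReal.ofReal (2 * Real.exp (-(t ^ 2 / 2) / (σ ^ 2 + R * t / 3))) := by
          rw [← ENNReal.ofReal_add (Real.exp_pos _).le (Real.exp_pos _).le]
          ring_nf
end
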